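/- arXiv:1210.4707 — 9 statements merged into one kernel-verified Lean document; each statement's English description precedes it below -/
import Mathlib

section
/- With the setup of a boundary pair (Γ, G) for a closed non-negative form h, the quadratic form l on G defined by l(φ) := ‖Sφ‖²_{H¹} with domain ran Γ is a closed quadratic form in G, and it satisfies the lower bound l(φ) ≥ ‖Γ‖⁻²_{H¹→G} · ‖φ‖²_G for all φ ∈ ran Γ. -/
/-! The lower bound is `‖φ‖ = ‖Γ (S φ)‖ ≤ ‖Γ‖ ‖S φ‖`. For closedness, a sequence `S φₙ` that is
Cauchy in `H¹` converges to some `f`; continuity of `Γ` gives `Γ f = ψ`, and `f` stays in the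
closed subspace `(ker Γ)ᗮ`. Since `Γ` is injective on `(ker Γ)ᗮ`, this forces `f = S ψ`. -/

open Filter Topology

namespace ContinuousLinearMap

section OpNorm

variable {𝕜 E F : Type*} [NontriviallyNormedField 𝕜] [SeminormedAddCommGroup E] [NormedSpace 𝕜 E]
  [SeminormedAddCommGroup F] [NormedSpace 𝕜 F]

lemma inv_opNorm_mul_norm_apply_le (T : E →L[𝕜] F) (x : E) : ‖T‖⁻¹ * ‖T x‖ ≤ ‖x‖ := by
  rcases (norm_nonneg T).eq_or_lt with hT | hT
  · simp [← hT]
  · exact (inv_mul_le_iff₀ hT).mpr (T.le_opNorm x)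

lemma inv_opNorm_sq_mul_norm_apply_sq_le (T : E →L[𝕜] F) (x : E) :
    ‖T‖⁻¹ ^ 2 * ‖T x‖ ^ 2 ≤ ‖x‖ ^ 2 := by
  rw [← mul_pow]
  exact pow_le_pow_left₀ (by positivity) (T.inv_opNorm_mul_norm_apply_le x) 2

end OpNorm

variable {𝕜 E F : Type*} [RCLike 𝕜] [NormedAddCommGroup E] [InnerProductSpace 𝕜 E]
  [TopologicalSpace F] [AddCommGroup F] [Module 𝕜 F] (T : E →L[𝕜] F)

lemma eq_of_mem_orthogonal_ker {x y : E} (hx : x ∈ (LinearMap.ker (T : E →ₗ[𝕜] F))ᗮ)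
    (hy : y ∈ (LinearMap.ker (T : E →ₗ[𝕜] F))ᗮ) (hxy : T x = T y) : x = y := by
  have h_ker : x - y ∈ LinearMap.ker (T : E →ₗ[𝕜] F) := by simp [hxy]
  have h_perp := Submodule.sub_mem _ hx hy
  exact sub_eq_zero.mp (Submodule.disjoint_def.mp (Submodule.orthogonal_disjoint _) _ h_ker h_perp)

variable {T} {S : LinearMap.range (T : E →ₗ[𝕜] F) → E}

lemma rightInverse_apply_of_mem_orthogonal_ker
    (hS_mem : ∀ φ, S φ ∈ (LinearMap.ker (T : E →ₗ[𝕜] F))ᗮ) (hS_right : ∀ φ, T (S φ) = φ) {x : E}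
    (hx : x ∈ (LinearMap.ker (T : E →ₗ[𝕜] F))ᗮ) :
    S ⟨T x, LinearMap.mem_range_self (T : E →ₗ[𝕜] F) x⟩ = x :=
  T.eq_of_mem_orthogonal_ker (hS_mem _) hx (hS_right _)

lemma exists_tendsto_of_cauchySeq_rightInverse [CompleteSpace E] [T2Space F]
    (hS_mem : ∀ φ, S φ ∈ (LinearMap.ker (T : E →ₗ[𝕜] F))ᗮ) (hS_right : ∀ φ, T (S φ) = φ)
    {φ : ℕ → LinearMap.range (T : E →ₗ[𝕜] F)} {ψ : F} (hc : CauchySeq fun n ↦ S (φ n))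
    (hφ : Tendsto (fun n ↦ (φ n : F)) atTop (𝓝 ψ)) :
    ∃ φ' : LinearMap.range (T : E →ₗ[𝕜] F), (φ' : F) = ψ ∧
      Tendsto (fun n ↦ S (φ n)) atTop (𝓝 (S φ')) := by
  obtain ⟨f, hf⟩ := cauchySeq_tendsto_of_complete hc
  have hTf : T f = ψ := by
    have h := (T.continuous.tendsto f).comp hf
    simp only [Function.comp_def, hS_right] at h
    exact tendsto_nhds_unique h hφ
  have hf_mem : f ∈ (LinearMap.ker (T : E →ₗ[𝕜] F))ᗮ :=
    (Submodule.isClosed_orthogonal _).mem_of_tendsto hf (.of_forall fun n ↦ hS_mem (φ n))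
  refine ⟨⟨T f, LinearMap.mem_range_self (T : E →ₗ[𝕜] F) f⟩, hTf, ?_⟩
  rwa [rightInverse_apply_of_mem_orthogonal_ker hS_mem hS_right hf_mem]

end ContinuousLinearMap

theorem dtn_form_closed_and_lower_bound_general
    {H1 G : Type*}
    [NormedAddCommGroup H1] [InnerProductSpace ℂ H1] [CompleteSpace H1]
    [NormedAddCommGroup G] [InnerProductSpace ℂ G]
    (Γ : H1 →L[ℂ] G)
    (S : (LinearMap.range (Γ : H1 →ₗ[ℂ] G) : Submodule ℂ G) →ₗ[ℂ] H1)
    (hS1 : ∀ φ : (LinearMap.range (Γ : H1 →ₗ[ℂ] G) : Submodule ℂ G), S φ ∈ (LinearMap.ker (Γ : H1 →ₗ[ℂ] G))ᗮ)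
    (hS2 : ∀ φ : (LinearMap.range (Γ : H1 →ₗ[ℂ] G) : Submodule ℂ G), Γ (S φ) = (φ : G)) :
    -- lower bound `l(φ) = ‖Sφ‖²_{H¹} ≥ ‖Γ‖⁻² ‖φ‖²_G`
    (∀ φ : (LinearMap.range (Γ : H1 →ₗ[ℂ] G) : Submodule ℂ G),
      (‖Γ‖⁻¹) ^ 2 * ‖(φ : G)‖ ^ 2 ≤ ‖S φ‖ ^ 2) ∧
    -- closedness of the form `l`
    (∀ (φ : ℕ → (LinearMap.range (Γ : H1 →ₗ[ℂ] G) : Submodule ℂ G)) (ψ : G),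
      CauchySeq (fun n => S (φ n)) →
      Filter.Tendsto (fun n => ((φ n : G))) Filter.atTop (nhds ψ) →
      ∃ φ' : (LinearMap.range (Γ : H1 →ₗ[ℂ] G) : Submodule ℂ G), (φ' : G) = ψ ∧
        Filter.Tendsto (fun n => S (φ n)) Filter.atTop (nhds (S φ'))) := by
  refine ⟨fun φ ↦ ?_, fun φ ψ hc hφ ↦
    Γ.exists_tendsto_of_cauchySeq_rightInverse hS1 hS2 hc hφ⟩
  simpa only [hS2] using Γ.inv_opNorm_sq_mul_norm_apply_sq_le (S φ)

/-- For a boundary pair `(Γ, G)` associated with a closed non-negative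
form `h` (form domain `H¹`, embedded in `H` via `J`), the quadratic form
`l(φ) := ‖Sφ‖²_{H¹}` with domain `ran Γ` is a closed quadratic form in `G`
and satisfies the lower bound `l(φ) ≥ ‖Γ‖⁻² ‖φ‖²_G` for all `φ ∈ ran Γ`.
Closedness is expressed by: every sequence in `ran Γ` which is Cauchy with respect to
the form norm `φ ↦ ‖Sφ‖_{H¹}` and converges in `G` has its limit in `ran Γ`, with
convergence in the form norm. -/
theorem dtn_form_closed_and_lower_bound
    {H H1 G : Type*}
    [NormedAddCommGroup H] [InnerProductSpace ℂ H] [CompleteSpace H]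
    [NormedAddCommGroup H1] [InnerProductSpace ℂ H1] [CompleteSpace H1]
    [NormedAddCommGroup G] [InnerProductSpace ℂ G] [CompleteSpace G]
    (J : H1 →L[ℂ] H) (hJinj : Function.Injective J) (hJdense : DenseRange J)
    (Γ : H1 →L[ℂ] G)
    (hker : Dense (J '' ((LinearMap.ker (Γ : H1 →ₗ[ℂ] G) : Submodule ℂ H1) : Set H1)))
    (hran : Dense ((LinearMap.range (Γ : H1 →ₗ[ℂ] G) : Submodule ℂ G) : Set G))
    (S : (LinearMap.range (Γ : H1 →ₗ[ℂ] G) : Submodule ℂ G) →ₗ[ℂ] H1)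
    (hS1 : ∀ φ : (LinearMap.range (Γ : H1 →ₗ[ℂ] G) : Submodule ℂ G), S φ ∈ (LinearMap.ker (Γ : H1 →ₗ[ℂ] G))ᗮ)
    (hS2 : ∀ φ : (LinearMap.range (Γ : H1 →ₗ[ℂ] G) : Submodule ℂ G), Γ (S φ) = (φ : G)) :
    -- lower bound `l(φ) = ‖Sφ‖²_{H¹} ≥ ‖Γ‖⁻² ‖φ‖²_G`
    (∀ φ : (LinearMap.range (Γ : H1 →ₗ[ℂ] G) : Submodule ℂ G),
      (‖Γ‖⁻¹) ^ 2 * ‖(φ : G)‖ ^ 2 ≤ ‖S φ‖ ^ 2) ∧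
    -- closedness of the form `l`
    (∀ (φ : ℕ → (LinearMap.range (Γ : H1 →ₗ[ℂ] G) : Submodule ℂ G)) (ψ : G),
      CauchySeq (fun n => S (φ n)) →
      Filter.Tendsto (fun n => ((φ n : G))) Filter.atTop (nhds ψ) →
      ∃ φ' : (LinearMap.range (Γ : H1 →ₗ[ℂ] G) : Submodule ℂ G), (φ' : G) = ψ ∧
        Filter.Tendsto (fun n => S (φ n)) Filter.atTop (nhds (S φ'))) :=
  dtn_form_closed_and_lower_bound_general Γ S hS1 hS2
end

section
/- Let (Γ, G) be a boundary pair for the form h and Λ its Dirichlet-to-Neumann operator at z = −1 (the operator associated with the form l(φ) = ‖Sφ‖²_{H¹}). Then the boundary map Γ is surjective (ran Γ = G) if and only if Λ is a bounded operator. -/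
/-!
Once `Γ` is onto, `S` is an everywhere defined right inverse of `Γ` with values in the closed
subspace `(ker Γ)ᗮ`, on which `Γ` is injective; its graph is therefore closed, so `S` is bounded.
The form `l(φ, ψ) = ⟪S ψ, S φ⟫ = ⟪ψ, S† S φ⟫` is then represented by the bounded operator `S† S`,
hence `Λ = S† S`. Conversely `dom Λ ⊆ dom l = ran Γ`.
-/

open ContinuousLinearMap Submodule

section

variable {𝕜 E F : Type*} [RCLike 𝕜] [NormedAddCommGroup E] [InnerProductSpace 𝕜 E]

local notation "⟪" x ", " y "⟫" => inner 𝕜 x y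

theorem LinearMap.injOn_orthogonal_ker [AddCommGroup F] [Module 𝕜 F] (f : E →ₗ[𝕜] F) :
    Set.InjOn f (LinearMap.ker f)ᗮ := by
  intro a ha b hb hab
  have hker : a - b ∈ LinearMap.ker f := by simp [hab]
  exact sub_eq_zero.1 <|
    (disjoint_def.1 (orthogonal_disjoint _)) _ hker (sub_mem ha hb)

variable [NormedAddCommGroup F] [InnerProductSpace 𝕜 F] [CompleteSpace E] [CompleteSpace F]

theorem ContinuousLinearMap.continuous_of_rightInverse_of_mem_orthogonal_ker (Γ : E →L[𝕜] F)
    (T : F →ₗ[𝕜] E) (hΓT : ∀ g, Γ (T g) = g)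
    (hT : ∀ g, T g ∈ (LinearMap.ker (Γ : E →ₗ[𝕜] F))ᗮ) :
    Continuous T := by
  refine T.continuous_of_seq_closed_graph fun u g x hu hTu => ?_
  have hx : x ∈ (LinearMap.ker (Γ : E →ₗ[𝕜] F))ᗮ :=
    (LinearMap.ker (Γ : E →ₗ[𝕜] F)).isClosed_orthogonal.mem_of_tendsto hTu
      (.of_forall fun n => hT (u n))
  have hΓx : Γ x = g := by
    refine tendsto_nhds_unique ?_ hu
    simpa [Function.comp_def, hΓT] using (Γ.continuous.tendsto x).comp hTu
  exact (Γ : E →ₗ[𝕜] F).injOn_orthogonal_ker hx (hT g) (by simp [hΓx, hΓT])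

/-- `Λ` is the operator associated with the everywhere defined form `(φ, ψ) ↦ ⟪T ψ, T φ⟫`. -/
structure LinearPMap.IsFormOperator (Λ : F →ₗ.[𝕜] F) (T : F →L[𝕜] E) : Prop where
  inner_apply : ∀ (φ : Λ.domain) (ψ : F), ⟪T ψ, T φ⟫ = ⟪ψ, Λ φ⟫
  mem_domain : ∀ φ w : F, (∀ ψ, ⟪T ψ, T φ⟫ = ⟪ψ, w⟫) → φ ∈ Λ.domain

namespace LinearPMap.IsFormOperator

variable {Λ : F →ₗ.[𝕜] F} {T : F →L[𝕜] E}

theorem domain_eq_top (hΛ : Λ.IsFormOperator T) : Λ.domain = ⊤ :=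
  eq_top_iff'.2 fun φ => hΛ.mem_domain φ (ContinuousLinearMap.adjoint T (T φ)) fun ψ =>
    (adjoint_inner_right T ψ (T φ)).symm

theorem apply_eq_adjoint_comp_self (hΛ : Λ.IsFormOperator T) (φ : Λ.domain) :
    Λ φ = (ContinuousLinearMap.adjoint T ∘L T) φ :=
  ext_inner_left 𝕜 fun ψ => by rw [← hΛ.inner_apply, comp_apply, adjoint_inner_right]

theorem norm_apply_le (hΛ : Λ.IsFormOperator T) (φ : Λ.domain) :
    ‖Λ φ‖ ≤ ‖ContinuousLinearMap.adjoint T ∘L T‖ * ‖(φ : F)‖ :=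
  hΛ.apply_eq_adjoint_comp_self φ ▸ le_opNorm _ _

end LinearPMap.IsFormOperator

end

theorem boundary_map_surjective_iff_dtn_bounded_general
    {H1 G : Type*}
    [NormedAddCommGroup H1] [InnerProductSpace ℂ H1] [CompleteSpace H1]
    [NormedAddCommGroup G] [InnerProductSpace ℂ G] [CompleteSpace G]
    (Γ : H1 →L[ℂ] G)
    (S : (LinearMap.range (Γ : H1 →ₗ[ℂ] G) : Submodule ℂ G) →ₗ[ℂ] H1)
    (hS1 : ∀ φ : (LinearMap.range (Γ : H1 →ₗ[ℂ] G) : Submodule ℂ G), S φ ∈ (LinearMap.ker (Γ : H1 →ₗ[ℂ] G))ᗮ)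
    (hS2 : ∀ φ : (LinearMap.range (Γ : H1 →ₗ[ℂ] G) : Submodule ℂ G), Γ (S φ) = (φ : G))
    -- `Λ` is the operator associated with the closed form `l(φ,ψ) = ⟨Sφ, Sψ⟩_{H¹}`
    (Λ : G →ₗ.[ℂ] G)
    (hΛdom : ∀ φ : Λ.domain, ∃ hm : (φ : G) ∈ LinearMap.range (Γ : H1 →ₗ[ℂ] G),
      ∀ ψ : (LinearMap.range (Γ : H1 →ₗ[ℂ] G) : Submodule ℂ G),
        (inner ℂ (S ψ) (S ⟨(φ : G), hm⟩) : ℂ) = inner ℂ (ψ : G) (Λ φ))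
    (hΛmax : ∀ (φ : (LinearMap.range (Γ : H1 →ₗ[ℂ] G) : Submodule ℂ G)) (w : G),
      (∀ ψ : (LinearMap.range (Γ : H1 →ₗ[ℂ] G) : Submodule ℂ G),
        (inner ℂ (S ψ) (S φ) : ℂ) = inner ℂ (ψ : G) w) → (φ : G) ∈ Λ.domain) :
    LinearMap.range (Γ : H1 →ₗ[ℂ] G) = ⊤ ↔
      (Λ.domain = ⊤ ∧ ∃ C : ℝ, ∀ φ : Λ.domain, ‖Λ φ‖ ≤ C * ‖(φ : G)‖) := by
  constructor
  · intro hsurj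
    let T : G →ₗ[ℂ] H1 := S ∘ₗ (LinearEquiv.ofTop _ hsurj).symm.toLinearMap
    have hT : Continuous T :=
      Γ.continuous_of_rightInverse_of_mem_orthogonal_ker T (fun _ => hS2 _) (fun _ => hS1 _)
    have hΛ : Λ.IsFormOperator ⟨T, hT⟩ :=
      ⟨fun φ _ => (hΛdom φ).2 _, fun _ w hw => hΛmax _ w fun ψ => hw ψ⟩
    exact ⟨hΛ.domain_eq_top, _, hΛ.norm_apply_le⟩
  · rintro ⟨hdom, -⟩
    exact eq_top_iff.2 fun g _ => (hΛdom ⟨g, hdom ▸ mem_top⟩).1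

/-- For a boundary pair `(Γ, G)` with Dirichlet solution operator `S`
and Dirichlet-to-Neumann operator `Λ` at `z = -1` (the self-adjoint operator associated
with the closed form `l(φ) = ‖Sφ‖²_{H¹}` on `ran Γ`), the boundary map `Γ` is surjective
(`ran Γ = G`) if and only if `Λ` is a bounded (everywhere defined) operator. -/
theorem boundary_map_surjective_iff_dtn_bounded
    {H H1 G : Type*}
    [NormedAddCommGroup H] [InnerProductSpace ℂ H] [CompleteSpace H]
    [NormedAddCommGroup H1] [InnerProductSpace ℂ H1] [CompleteSpace H1]
    [NormedAddCommGroup G] [InnerProductSpace ℂ G] [CompleteSpace G]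
    (J : H1 →L[ℂ] H) (hJinj : Function.Injective J) (hJdense : DenseRange J)
    (Γ : H1 →L[ℂ] G)
    (hker : Dense (J '' ((LinearMap.ker (Γ : H1 →ₗ[ℂ] G) : Submodule ℂ H1) : Set H1)))
    (hran : Dense ((LinearMap.range (Γ : H1 →ₗ[ℂ] G) : Submodule ℂ G) : Set G))
    (S : (LinearMap.range (Γ : H1 →ₗ[ℂ] G) : Submodule ℂ G) →ₗ[ℂ] H1)
    (hS1 : ∀ φ : (LinearMap.range (Γ : H1 →ₗ[ℂ] G) : Submodule ℂ G), S φ ∈ (LinearMap.ker (Γ : H1 →ₗ[ℂ] G))ᗮ)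
    (hS2 : ∀ φ : (LinearMap.range (Γ : H1 →ₗ[ℂ] G) : Submodule ℂ G), Γ (S φ) = (φ : G))
    -- `Λ` is the operator associated with the closed form `l(φ,ψ) = ⟨Sφ, Sψ⟩_{H¹}`
    (Λ : G →ₗ.[ℂ] G)
    (hΛdom : ∀ φ : Λ.domain, ∃ hm : (φ : G) ∈ LinearMap.range (Γ : H1 →ₗ[ℂ] G),
      ∀ ψ : (LinearMap.range (Γ : H1 →ₗ[ℂ] G) : Submodule ℂ G),
        (inner ℂ (S ψ) (S ⟨(φ : G), hm⟩) : ℂ) = inner ℂ (ψ : G) (Λ φ))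
    (hΛmax : ∀ (φ : (LinearMap.range (Γ : H1 →ₗ[ℂ] G) : Submodule ℂ G)) (w : G),
      (∀ ψ : (LinearMap.range (Γ : H1 →ₗ[ℂ] G) : Submodule ℂ G),
        (inner ℂ (S ψ) (S φ) : ℂ) = inner ℂ (ψ : G) w) → (φ : G) ∈ Λ.domain)
    (hΛsym : ∀ u v : Λ.domain, (inner ℂ (Λ u) ((v : G)) : ℂ) = inner ℂ ((u : G)) (Λ v)) :
    LinearMap.range (Γ : H1 →ₗ[ℂ] G) = ⊤ ↔
      (Λ.domain = ⊤ ∧ ∃ C : ℝ, ∀ φ : Λ.domain, ‖Λ φ‖ ≤ C * ‖(φ : G)‖) :=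
  boundary_map_surjective_iff_dtn_bounded_general Γ S hS1 hS2 Λ hΛdom hΛmax
end

section
/- Let (Γ, G) be a boundary pair for h, with Dirichlet operator H^D (the operator associated with h restricted to ker Γ, acting in the closure of ker Γ in H). For z ∈ ℂ not in spec(H^D), define the weak solution space L¹(z) = {u ∈ H¹ : h(u,f) − z⟨u,f⟩_H = 0 for all f ∈ ker Γ}. Then H¹ decomposes as the direct (topological) sum H¹ = ker Γ ∔ L¹(z), and the sum is orthogonal when z = −1. -/
/-!
Write `K = ker Γ` and `L(z)` for the weak solution space. Since `h(f,u) = ⟨f,u⟩_{H¹} - ⟨Jf,Ju⟩_H`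
is continuous in `u`, `L(z)` is closed. An element of `K ∩ L(z)` lies in the domain of `H^D`
and is an eigenvector for `z`, so it vanishes because `z` is in the resolvent set. To split
`u ∈ H¹`, project it orthogonally onto `K`: the remainder `v ∈ Kᗮ` satisfies
`h(f,v) - z⟨Jf,Jv⟩ = ⟨Jf, -(1+z)Jv⟩` for `f ∈ K`, and the Dirichlet problem
`(H^D - z) g = -(1+z)Jv`, solved by the resolvent, yields `g ∈ K` with `v - g ∈ L(z)`.
For `z = -1` the defining identity of `L(-1)` says exactly `⟨f,w⟩_{H¹} = 0` for `f ∈ K`.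
-/

/-- `R` is a (bounded, everywhere defined, two-sided) resolvent of the (possibly
unbounded) operator `T` at the spectral point `z`, witnessing `z ∉ spec T`. -/
def ResolventAt {E : Type*} [NormedAddCommGroup E] [NormedSpace ℂ E]
    (T : E →ₗ.[ℂ] E) (z : ℂ) (R : E →L[ℂ] E) : Prop :=
  (∀ x : E, ∃ hx : R x ∈ T.domain, T ⟨R x, hx⟩ - z • R x = x) ∧
  ∀ u : T.domain, R (T u - z • (u : E)) = (u : E)

theorem ResolventAt.eq_zero_of_apply_eq_smul {E : Type*} [NormedAddCommGroup E]
    [NormedSpace ℂ E] {T : E →ₗ.[ℂ] E} {z : ℂ} {R : E →L[ℂ] E} (hR : ResolventAt T z R)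
    (u : T.domain) (hu : T u = z • (u : E)) : (u : E) = 0 := by
  simpa [hu] using (hR.2 u).symm

section WeakSolutions

variable {H H1 G : Type*}
  [NormedAddCommGroup H] [InnerProductSpace ℂ H]
  [NormedAddCommGroup H1] [InnerProductSpace ℂ H1]
  [NormedAddCommGroup G] [NormedSpace ℂ G]
  {J : H1 →L[ℂ] H} {hform : H1 → H1 → ℂ} {Γ : H1 →L[ℂ] G}

variable (J hform Γ) in
/-- The weak solution space `L¹(z)`. -/
def weakSolutionSpace (z : ℂ) : Set H1 :=
  {u | ∀ f : H1, Γ f = 0 → hform f u = z * (inner ℂ (J f) (J u) : ℂ)}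

theorem hform_eq_inner_sub
    (hpol : ∀ u v : H1, (inner ℂ u v : ℂ) = (inner ℂ (J u) (J v) : ℂ) + hform u v)
    (u v : H1) : hform u v = (inner ℂ u v : ℂ) - (inner ℂ (J u) (J v) : ℂ) := by
  rw [hpol]; ring

theorem isClosed_weakSolutionSpace
    (hpol : ∀ u v : H1, (inner ℂ u v : ℂ) = (inner ℂ (J u) (J v) : ℂ) + hform u v)
    (z : ℂ) : IsClosed (weakSolutionSpace J hform Γ z) := by
  have hset : weakSolutionSpace J hform Γ z =
      ⋂ f ∈ {f : H1 | Γ f = 0}, {u | hform f u = z * (inner ℂ (J f) (J u) : ℂ)} := by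
    ext u; simp [weakSolutionSpace]
  rw [hset]
  refine isClosed_biInter fun f _ => isClosed_eq ?_ (by fun_prop)
  rw [show hform f = fun u => (inner ℂ f u : ℂ) - (inner ℂ (J f) (J u) : ℂ) from
    funext (hform_eq_inner_sub hpol f)]
  fun_prop

variable {HD : H →ₗ.[ℂ] H} {z : ℂ} {R : H →L[ℂ] H}

/-- Weak solvability of the Dirichlet problem `(H^D - z) g = x`. -/
theorem exists_dirichlet_solution
    (hHDdom : ∀ u : HD.domain, ∃ u1 : H1, J u1 = (u : H) ∧ Γ u1 = 0 ∧
      ∀ f : H1, Γ f = 0 → hform f u1 = (inner ℂ (J f) (HD u) : ℂ))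
    (hR : ResolventAt HD z R) (x : H) :
    ∃ g : H1, Γ g = 0 ∧ ∀ f : H1, Γ f = 0 →
      hform f g = (inner ℂ (J f) x : ℂ) + z * (inner ℂ (J f) (J g) : ℂ) := by
  obtain ⟨hx, hres⟩ := hR.1 x
  obtain ⟨g, hgJ, hgΓ, hg⟩ := hHDdom ⟨R x, hx⟩
  refine ⟨g, hgΓ, fun f hf => ?_⟩
  rw [hg f hf, eq_add_of_sub_eq hres, hgJ, inner_add_right, inner_smul_right]

theorem eq_zero_of_mem_ker_of_mem_weakSolutionSpace (hJinj : Function.Injective J)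
    (hHDmax : ∀ (u1 : H1) (w : H), Γ u1 = 0 →
      (∀ f : H1, Γ f = 0 → hform f u1 = (inner ℂ (J f) w : ℂ)) →
      ∃ hu : J u1 ∈ HD.domain, HD ⟨J u1, hu⟩ = w)
    (hR : ResolventAt HD z R) {w : H1} (hwΓ : Γ w = 0)
    (hw : w ∈ weakSolutionSpace J hform Γ z) : w = 0 := by
  obtain ⟨hdom, hHDw⟩ := hHDmax w (z • J w) hwΓ fun f hf => by
    rw [inner_smul_right]; exact hw f hf
  have hJw : J w = 0 := hR.eq_zero_of_apply_eq_smul ⟨J w, hdom⟩ hHDw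
  exact hJinj (hJw.trans (map_zero J).symm)

theorem exists_mem_ker_add_mem_weakSolutionSpace [CompleteSpace H1]
    (hpol : ∀ u v : H1, (inner ℂ u v : ℂ) = (inner ℂ (J u) (J v) : ℂ) + hform u v)
    (hHDdom : ∀ u : HD.domain, ∃ u1 : H1, J u1 = (u : H) ∧ Γ u1 = 0 ∧
      ∀ f : H1, Γ f = 0 → hform f u1 = (inner ℂ (J f) (HD u) : ℂ))
    (hR : ResolventAt HD z R) (u : H1) :
    ∃ f w : H1, Γ f = 0 ∧ w ∈ weakSolutionSpace J hform Γ z ∧ u = f + w := by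
  set K : Submodule ℂ H1 := LinearMap.ker (Γ : H1 →ₗ[ℂ] G)
  have : CompleteSpace K := (ContinuousLinearMap.isClosed_ker Γ).completeSpace_coe
  set p : H1 := K.starProjection u
  have hp : Γ p = 0 := K.starProjection_apply_mem u
  have hv : u - p ∈ Kᗮ := K.sub_starProjection_mem_orthogonal u
  obtain ⟨g, hgΓ, hg⟩ := exists_dirichlet_solution hHDdom hR (-(1 + z) • J (u - p))
  refine ⟨p + g, u - p - g, by simp [hp, hgΓ], fun f hf => ?_, by abel⟩
  have hfv : (inner ℂ f (u - p) : ℂ) = 0 := (Submodule.mem_orthogonal K _).mp hv f hf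
  have hfg := hg f hf
  rw [hform_eq_inner_sub hpol] at hfg ⊢
  simp only [map_sub, inner_sub_right, inner_smul_right] at hfg hfv ⊢
  linear_combination hfv - hfg

theorem inner_eq_zero_of_mem_ker_of_mem_weakSolutionSpace_neg_one
    (hpol : ∀ u v : H1, (inner ℂ u v : ℂ) = (inner ℂ (J u) (J v) : ℂ) + hform u v)
    {f w : H1} (hf : Γ f = 0) (hw : w ∈ weakSolutionSpace J hform Γ (-1)) :
    (inner ℂ f w : ℂ) = 0 := by
  rw [hpol, hw f hf]; ring

end WeakSolutions

theorem domain_decomposition_ker_and_weak_solutions_general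
    {H H1 G : Type*}
    [NormedAddCommGroup H] [InnerProductSpace ℂ H]
    [NormedAddCommGroup H1] [InnerProductSpace ℂ H1] [CompleteSpace H1]
    [NormedAddCommGroup G] [InnerProductSpace ℂ G]
    (J : H1 →L[ℂ] H) (hJinj : Function.Injective J)
    -- the sesquilinear form `h` (conjugate-linear in the first argument), determined by
    -- `⟨u,v⟩_{H¹} = ⟨Ju, Jv⟩_H + h(u,v)`
    (hform : H1 → H1 → ℂ)
    (hpol : ∀ u v : H1, (inner ℂ u v : ℂ) = (inner ℂ (J u) (J v) : ℂ) + hform u v)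
    (Γ : H1 →L[ℂ] G)
    -- the Dirichlet operator `HD`, associated with `h` restricted to `ker Γ`
    (HD : H →ₗ.[ℂ] H)
    (hHDdom : ∀ u : HD.domain, ∃ u1 : H1, J u1 = (u : H) ∧ Γ u1 = 0 ∧
      ∀ f : H1, Γ f = 0 → hform f u1 = (inner ℂ (J f) (HD u) : ℂ))
    (hHDmax : ∀ (u1 : H1) (w : H), Γ u1 = 0 →
      (∀ f : H1, Γ f = 0 → hform f u1 = (inner ℂ (J f) w : ℂ)) →
      ∃ hu : J u1 ∈ HD.domain, HD ⟨J u1, hu⟩ = w)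
    -- `z ∉ spec HD`
    (z : ℂ) (R : H →L[ℂ] H) (hR : ResolventAt HD z R) :
    -- `ker Γ` and `L¹(z)` are closed subspaces of `H¹`
    IsClosed ((LinearMap.ker (Γ : H1 →ₗ[ℂ] G) : Submodule ℂ H1) : Set H1) ∧
    IsClosed {u : H1 | ∀ f : H1, Γ f = 0 → hform f u = z * (inner ℂ (J f) (J u) : ℂ)} ∧
    -- `H¹ = ker Γ + L¹(z)`
    (∀ u : H1, ∃ f w : H1, Γ f = 0 ∧
      (∀ g : H1, Γ g = 0 → hform g w = z * (inner ℂ (J g) (J w) : ℂ)) ∧ u = f + w) ∧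
    -- the sum is direct
    (∀ f w : H1, Γ f = 0 →
      (∀ g : H1, Γ g = 0 → hform g w = z * (inner ℂ (J g) (J w) : ℂ)) →
      f + w = 0 → f = 0 ∧ w = 0) ∧
    -- orthogonality (in `H¹`) for `z = -1`
    (z = -1 → ∀ f w : H1, Γ f = 0 →
      (∀ g : H1, Γ g = 0 → hform g w = z * (inner ℂ (J g) (J w) : ℂ)) →
      (inner ℂ f w : ℂ) = 0) := by
  refine ⟨ContinuousLinearMap.isClosed_ker Γ, isClosed_weakSolutionSpace hpol z,
    exists_mem_ker_add_mem_weakSolutionSpace hpol hHDdom hR, ?direct, ?orthogonal⟩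
  case direct =>
    intro f w hfΓ hw hsum
    have hwΓ : Γ w = 0 := by rw [eq_neg_of_add_eq_zero_right hsum, map_neg, hfΓ, neg_zero]
    have hw0 := eq_zero_of_mem_ker_of_mem_weakSolutionSpace hJinj hHDmax hR hwΓ hw
    exact ⟨by simpa [hw0] using hsum, hw0⟩
  case orthogonal =>
    rintro rfl f w hf hw
    exact inner_eq_zero_of_mem_ker_of_mem_weakSolutionSpace_neg_one hpol hf hw

/-- Let `(Γ, G)` be a boundary pair for the form `h` (with sesquilinear
form `hform`, conjugate-linear in the first entry, related to the `H¹`- and `H`-inner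
products by polarization), and let `HD` be the Dirichlet operator (the operator
associated with `h` restricted to `ker Γ`).  For `z ∉ spec HD` (witnessed by a bounded
resolvent `R`), the form domain `H¹` decomposes as the direct topological sum
`H¹ = ker Γ ∔ L¹(z)`, where `L¹(z) = {u : h(u,f) = z⟨u,f⟩_H ∀ f ∈ ker Γ}` is the weak
solution space; the sum is orthogonal for `z = -1`. -/
theorem domain_decomposition_ker_and_weak_solutions
    {H H1 G : Type*}
    [NormedAddCommGroup H] [InnerProductSpace ℂ H] [CompleteSpace H]
    [NormedAddCommGroup H1] [InnerProductSpace ℂ H1] [CompleteSpace H1]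
    [NormedAddCommGroup G] [InnerProductSpace ℂ G] [CompleteSpace G]
    (J : H1 →L[ℂ] H) (hJinj : Function.Injective J) (hJdense : DenseRange J)
    -- the sesquilinear form `h` (conjugate-linear in the first argument), determined by
    -- `⟨u,v⟩_{H¹} = ⟨Ju, Jv⟩_H + h(u,v)`
    (hform : H1 → H1 → ℂ)
    (hpol : ∀ u v : H1, (inner ℂ u v : ℂ) = (inner ℂ (J u) (J v) : ℂ) + hform u v)
    (Γ : H1 →L[ℂ] G)
    (hker : Dense (J '' ((LinearMap.ker (Γ : H1 →ₗ[ℂ] G) : Submodule ℂ H1) : Set H1)))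
    (hran : Dense ((LinearMap.range (Γ : H1 →ₗ[ℂ] G) : Submodule ℂ G) : Set G))
    -- the Dirichlet operator `HD`, associated with `h` restricted to `ker Γ`
    (HD : H →ₗ.[ℂ] H)
    (hHDdom : ∀ u : HD.domain, ∃ u1 : H1, J u1 = (u : H) ∧ Γ u1 = 0 ∧
      ∀ f : H1, Γ f = 0 → hform f u1 = (inner ℂ (J f) (HD u) : ℂ))
    (hHDmax : ∀ (u1 : H1) (w : H), Γ u1 = 0 →
      (∀ f : H1, Γ f = 0 → hform f u1 = (inner ℂ (J f) w : ℂ)) →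
      ∃ hu : J u1 ∈ HD.domain, HD ⟨J u1, hu⟩ = w)
    -- `z ∉ spec HD`
    (z : ℂ) (R : H →L[ℂ] H) (hR : ResolventAt HD z R) :
    -- `ker Γ` and `L¹(z)` are closed subspaces of `H¹`
    IsClosed ((LinearMap.ker (Γ : H1 →ₗ[ℂ] G) : Submodule ℂ H1) : Set H1) ∧
    IsClosed {u : H1 | ∀ f : H1, Γ f = 0 → hform f u = z * (inner ℂ (J f) (J u) : ℂ)} ∧
    -- `H¹ = ker Γ + L¹(z)`
    (∀ u : H1, ∃ f w : H1, Γ f = 0 ∧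
      (∀ g : H1, Γ g = 0 → hform g w = z * (inner ℂ (J g) (J w) : ℂ)) ∧ u = f + w) ∧
    -- the sum is direct
    (∀ f w : H1, Γ f = 0 →
      (∀ g : H1, Γ g = 0 → hform g w = z * (inner ℂ (J g) (J w) : ℂ)) →
      f + w = 0 → f = 0 ∧ w = 0) ∧
    -- orthogonality (in `H¹`) for `z = -1`
    (z = -1 → ∀ f w : H1, Γ f = 0 →
      (∀ g : H1, Γ g = 0 → hform g w = z * (inner ℂ (J g) (J w) : ℂ)) →
      (inner ℂ f w : ℂ) = 0) :=
  domain_decomposition_ker_and_weak_solutions_general J hJinj hform hpol Γ HD hHDdom hHDmax z R hR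
end

section
/- Let (Γ, G) be a boundary pair for h with Dirichlet operator H^D and Dirichlet solution operators S(z). For z ∉ spec(H^D), define the Dirichlet-to-Neumann sesquilinear form l_z on ran Γ × ran Γ by l_z(φ, ψ) := h(S(z)φ, g) − z⟨S(z)φ, g⟩_H where g ∈ H¹ is any element with Γg = ψ. Then l_z is well-defined (independent of the choice of g), and for z, w ∉ spec(H^D) the difference formula l_z(φ,ψ) − l_w(φ,ψ) = −(z − w)⟨S(z)φ, S(w̄)ψ⟩_H holds. -/
/-!
Because `h` differs from the inner product of `H¹` by the pulled-back inner product of `H`, it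
is additive in its first slot and conjugate symmetric. Two choices of `g` with the same trace
differ by an element of `ker Γ`, on which the pairing with a weak solution vanishes. For the
difference formula one takes `g = S(w̄)ψ`: then `S(z)φ - S(w)φ ∈ ker Γ`, and testing the weak
equation of `S(w̄)ψ` against it and conjugating gives the formula.
-/

section DirichletToNeumann

variable {H H1 G : Type*}
  [NormedAddCommGroup H] [InnerProductSpace ℂ H]
  [NormedAddCommGroup H1] [InnerProductSpace ℂ H1]
  [AddCommGroup G] [Module ℂ G]
  (Γ : H1 →ₗ[ℂ] G) (J : H1 →ₗ[ℂ] H) (hform : H1 → H1 → ℂ)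

/-- `u` solves `(H - ζ) u = 0` weakly with respect to the test space `ker Γ`. -/
def IsWeakSolution (ζ : ℂ) (u : H1) : Prop :=
  ∀ f : H1, Γ f = 0 → hform f u = ζ * inner ℂ (J f) (J u)

/-- The expression `h(u, g) - ζ ⟨u, g⟩_H` defining `l_ζ(φ, ψ)` for `u = S(ζ)φ` and `Γ g = ψ`. -/
noncomputable def dtnPairing (ζ : ℂ) (u g : H1) : ℂ :=
  hform g u - ζ * inner ℂ (J g) (J u)

variable {J hform}

variable (hpol : ∀ u v : H1, inner ℂ u v = inner ℂ (J u) (J v) + hform u v)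
include hpol

theorem hform_eq_inner_sub_inner (u v : H1) :
    hform u v = inner ℂ u v - inner ℂ (J u) (J v) := by
  linear_combination -hpol u v

theorem hform_sub_left (a b v : H1) : hform (a - b) v = hform a v - hform b v := by
  simp only [hform_eq_inner_sub_inner hpol, map_sub, inner_sub_left]
  ring

theorem hform_conj_symm (u v : H1) : starRingEnd ℂ (hform u v) = hform v u := by
  simp only [hform_eq_inner_sub_inner hpol, map_sub, inner_conj_symm]

theorem dtnPairing_sub_left (ζ : ℂ) (u a b : H1) :
    dtnPairing J hform ζ u (a - b) = dtnPairing J hform ζ u a - dtnPairing J hform ζ u b := by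
  simp only [dtnPairing, hform_sub_left hpol, map_sub, inner_sub_left]
  ring

theorem dtnPairing_congr_of_map_eq {ζ : ℂ} {u : H1} (hu : IsWeakSolution Γ J hform ζ u)
    {g₁ g₂ : H1} (hg : Γ g₁ = Γ g₂) :
    dtnPairing J hform ζ u g₁ = dtnPairing J hform ζ u g₂ := by
  have hker : Γ (g₁ - g₂) = 0 := by rw [map_sub, hg, sub_self]
  have hzero : dtnPairing J hform ζ u (g₁ - g₂) = 0 := by
    rw [dtnPairing, hu _ hker, sub_self]
  rwa [dtnPairing_sub_left hpol, sub_eq_zero] at hzero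

theorem IsWeakSolution.hform_left {ζ : ℂ} {s : H1}
    (hs : IsWeakSolution Γ J hform (starRingEnd ℂ ζ) s) {f : H1} (hf : Γ f = 0) :
    hform s f = ζ * inner ℂ (J s) (J f) := by
  rw [← hform_conj_symm hpol, hs f hf, map_mul, Complex.conj_conj, inner_conj_symm]

theorem dtnPairing_sub_dtnPairing {z w : ℂ} {uz uw s : H1}
    (hs : IsWeakSolution Γ J hform (starRingEnd ℂ w) s) (htrace : Γ uz = Γ uw) :
    dtnPairing J hform z uz s - dtnPairing J hform w uw s = -(z - w) * inner ℂ (J s) (J uz) := by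
  have hker : Γ (uz - uw) = 0 := by rw [map_sub, htrace, sub_self]
  have hdiff := hs.hform_left Γ hpol hker
  simp only [dtnPairing, hform_eq_inner_sub_inner hpol, map_sub, inner_sub_right] at hdiff ⊢
  linear_combination hdiff

end DirichletToNeumann

/-- `h(a,b)` of the paper is `hform b a`, and `⟨a,b⟩_H` is `inner ℂ b a`. -/
theorem dtn_form_well_defined_and_difference_formula_general
    {H H1 G : Type*}
    [NormedAddCommGroup H] [InnerProductSpace ℂ H]
    [NormedAddCommGroup H1] [InnerProductSpace ℂ H1]
    [NormedAddCommGroup G] [InnerProductSpace ℂ G]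
    (J : H1 →L[ℂ] H)
    (hform : H1 → H1 → ℂ)
    (hpol : ∀ u v : H1, (inner ℂ u v : ℂ) = (inner ℂ (J u) (J v) : ℂ) + hform u v)
    (Γ : H1 →L[ℂ] G)
    (z w : ℂ)
    -- Dirichlet solution operator at `z`
    (Sz : (LinearMap.range (Γ : H1 →ₗ[ℂ] G) : Submodule ℂ G) →ₗ[ℂ] H1)
    (hSz1 : ∀ (φ : (LinearMap.range (Γ : H1 →ₗ[ℂ] G) : Submodule ℂ G)) (f : H1), Γ f = 0 →
      hform f (Sz φ) = z * (inner ℂ (J f) (J (Sz φ)) : ℂ))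
    (hSz2 : ∀ φ : (LinearMap.range (Γ : H1 →ₗ[ℂ] G) : Submodule ℂ G), Γ (Sz φ) = (φ : G))
    -- Dirichlet solution operator at `w`
    (Sw : (LinearMap.range (Γ : H1 →ₗ[ℂ] G) : Submodule ℂ G) →ₗ[ℂ] H1)
    (hSw1 : ∀ (φ : (LinearMap.range (Γ : H1 →ₗ[ℂ] G) : Submodule ℂ G)) (f : H1), Γ f = 0 →
      hform f (Sw φ) = w * (inner ℂ (J f) (J (Sw φ)) : ℂ))
    (hSw2 : ∀ φ : (LinearMap.range (Γ : H1 →ₗ[ℂ] G) : Submodule ℂ G), Γ (Sw φ) = (φ : G))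
    -- Dirichlet solution operator at `w̄`
    (Swb : (LinearMap.range (Γ : H1 →ₗ[ℂ] G) : Submodule ℂ G) →ₗ[ℂ] H1)
    (hSwb1 : ∀ (φ : (LinearMap.range (Γ : H1 →ₗ[ℂ] G) : Submodule ℂ G)) (f : H1), Γ f = 0 →
      hform f (Swb φ) = (starRingEnd ℂ) w * (inner ℂ (J f) (J (Swb φ)) : ℂ))
    (hSwb2 : ∀ φ : (LinearMap.range (Γ : H1 →ₗ[ℂ] G) : Submodule ℂ G), Γ (Swb φ) = (φ : G)) :
    -- well-definedness of `l_z`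
    (∀ (φ : (LinearMap.range (Γ : H1 →ₗ[ℂ] G) : Submodule ℂ G)) (g₁ g₂ : H1), Γ g₁ = Γ g₂ →
      hform g₁ (Sz φ) - z * (inner ℂ (J g₁) (J (Sz φ)) : ℂ) =
      hform g₂ (Sz φ) - z * (inner ℂ (J g₂) (J (Sz φ)) : ℂ)) ∧
    -- difference formula `l_z(φ,ψ) - l_w(φ,ψ) = -(z-w)⟨S(z)φ, S(w̄)ψ⟩_H`
    (∀ (φ ψ : (LinearMap.range (Γ : H1 →ₗ[ℂ] G) : Submodule ℂ G)) (g : H1), Γ g = (ψ : G) →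
      (hform g (Sz φ) - z * (inner ℂ (J g) (J (Sz φ)) : ℂ)) -
      (hform g (Sw φ) - w * (inner ℂ (J g) (J (Sw φ)) : ℂ)) =
      -(z - w) * (inner ℂ (J (Swb ψ)) (J (Sz φ)) : ℂ)) := by
  have hpol' : ∀ u v : H1, inner ℂ u v = inner ℂ ((J : H1 →ₗ[ℂ] H) u) (J v) + hform u v := hpol
  have hz : ∀ φ, IsWeakSolution (Γ : H1 →ₗ[ℂ] G) (J : H1 →ₗ[ℂ] H) hform z (Sz φ) := hSz1
  have hw : ∀ φ, IsWeakSolution (Γ : H1 →ₗ[ℂ] G) (J : H1 →ₗ[ℂ] H) hform w (Sw φ) := hSw1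
  have hwb : ∀ ψ, IsWeakSolution (Γ : H1 →ₗ[ℂ] G) (J : H1 →ₗ[ℂ] H) hform
      (starRingEnd ℂ w) (Swb ψ) := hSwb1
  refine ⟨fun φ g₁ g₂ hg ↦ dtnPairing_congr_of_map_eq _ hpol' (hz φ) hg, fun φ ψ g hg ↦ ?_⟩
  have hgs : Γ g = Γ (Swb ψ) := by rw [hg, hSwb2]
  change dtnPairing (J : H1 →ₗ[ℂ] H) hform z (Sz φ) g -
    dtnPairing (J : H1 →ₗ[ℂ] H) hform w (Sw φ) g = _
  rw [dtnPairing_congr_of_map_eq _ hpol' (hz φ) hgs, dtnPairing_congr_of_map_eq _ hpol' (hw φ) hgs]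
  exact dtnPairing_sub_dtnPairing _ hpol' (hwb ψ) (by simp [hSz2, hSw2])

set_option maxHeartbeats 1000000 in
/-- Let `(Γ, G)` be a boundary pair for `h` with Dirichlet solution
operators `S(·)`.  For `z ∉ spec HD`, the Dirichlet-to-Neumann sesquilinear form
`l_z(φ,ψ) := h(S(z)φ, g) - z⟨S(z)φ, g⟩_H`, where `g ∈ H¹` is any element with `Γg = ψ`,
is well defined (independent of the choice of `g`), and for `z, w ∉ spec HD` the
difference formula `l_z(φ,ψ) - l_w(φ,ψ) = -(z-w)⟨S(z)φ, S(w̄)ψ⟩_H` holds.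
(The sesquilinear form `hform` is conjugate-linear in its first slot; `h(a,b)` of the
paper corresponds to `hform b a`, and `⟨a,b⟩_H` to `inner b a`.) -/
theorem dtn_form_well_defined_and_difference_formula
    {H H1 G : Type*}
    [NormedAddCommGroup H] [InnerProductSpace ℂ H] [CompleteSpace H]
    [NormedAddCommGroup H1] [InnerProductSpace ℂ H1] [CompleteSpace H1]
    [NormedAddCommGroup G] [InnerProductSpace ℂ G] [CompleteSpace G]
    (J : H1 →L[ℂ] H) (hJinj : Function.Injective J) (hJdense : DenseRange J)
    (hform : H1 → H1 → ℂ)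
    (hpol : ∀ u v : H1, (inner ℂ u v : ℂ) = (inner ℂ (J u) (J v) : ℂ) + hform u v)
    (Γ : H1 →L[ℂ] G)
    (hker : Dense (J '' ((LinearMap.ker (Γ : H1 →ₗ[ℂ] G) : Submodule ℂ H1) : Set H1)))
    (hran : Dense ((LinearMap.range (Γ : H1 →ₗ[ℂ] G) : Submodule ℂ G) : Set G))
    (z w : ℂ)
    -- Dirichlet solution operator at `z`
    (Sz : (LinearMap.range (Γ : H1 →ₗ[ℂ] G) : Submodule ℂ G) →ₗ[ℂ] H1)
    (hSz1 : ∀ (φ : (LinearMap.range (Γ : H1 →ₗ[ℂ] G) : Submodule ℂ G)) (f : H1), Γ f = 0 →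
      hform f (Sz φ) = z * (inner ℂ (J f) (J (Sz φ)) : ℂ))
    (hSz2 : ∀ φ : (LinearMap.range (Γ : H1 →ₗ[ℂ] G) : Submodule ℂ G), Γ (Sz φ) = (φ : G))
    -- Dirichlet solution operator at `w`
    (Sw : (LinearMap.range (Γ : H1 →ₗ[ℂ] G) : Submodule ℂ G) →ₗ[ℂ] H1)
    (hSw1 : ∀ (φ : (LinearMap.range (Γ : H1 →ₗ[ℂ] G) : Submodule ℂ G)) (f : H1), Γ f = 0 →
      hform f (Sw φ) = w * (inner ℂ (J f) (J (Sw φ)) : ℂ))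
    (hSw2 : ∀ φ : (LinearMap.range (Γ : H1 →ₗ[ℂ] G) : Submodule ℂ G), Γ (Sw φ) = (φ : G))
    -- Dirichlet solution operator at `w̄`
    (Swb : (LinearMap.range (Γ : H1 →ₗ[ℂ] G) : Submodule ℂ G) →ₗ[ℂ] H1)
    (hSwb1 : ∀ (φ : (LinearMap.range (Γ : H1 →ₗ[ℂ] G) : Submodule ℂ G)) (f : H1), Γ f = 0 →
      hform f (Swb φ) = (starRingEnd ℂ) w * (inner ℂ (J f) (J (Swb φ)) : ℂ))
    (hSwb2 : ∀ φ : (LinearMap.range (Γ : H1 →ₗ[ℂ] G) : Submodule ℂ G), Γ (Swb φ) = (φ : G)) :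
    -- well-definedness of `l_z`
    (∀ (φ : (LinearMap.range (Γ : H1 →ₗ[ℂ] G) : Submodule ℂ G)) (g₁ g₂ : H1), Γ g₁ = Γ g₂ →
      hform g₁ (Sz φ) - z * (inner ℂ (J g₁) (J (Sz φ)) : ℂ) =
      hform g₂ (Sz φ) - z * (inner ℂ (J g₂) (J (Sz φ)) : ℂ)) ∧
    -- difference formula `l_z(φ,ψ) - l_w(φ,ψ) = -(z-w)⟨S(z)φ, S(w̄)ψ⟩_H`
    (∀ (φ ψ : (LinearMap.range (Γ : H1 →ₗ[ℂ] G) : Submodule ℂ G)) (g : H1), Γ g = (ψ : G) →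
      (hform g (Sz φ) - z * (inner ℂ (J g) (J (Sz φ)) : ℂ)) -
      (hform g (Sw φ) - w * (inner ℂ (J g) (J (Sw φ)) : ℂ)) =
      -(z - w) * (inner ℂ (J (Swb ψ)) (J (Sz φ)) : ℂ)) :=
  dtn_form_well_defined_and_difference_formula_general J hform hpol Γ z w Sz hSz1 hSz2 Sw hSw1 hSw2
    Swb hSwb1 hSwb2
end

section
/- Let (Γ, G) be a boundary pair for h and l_z the Dirichlet-to-Neumann form at z ∉ spec(H^D). Then for z with Im z ≥ 0 and φ ∈ ran Γ, the imaginary part of the quadratic form satisfies Im l_z(φ) = −(Im z) · ‖S(z)φ‖²_H ≤ 0. In particular z ↦ −l_z(φ) is a Herglotz function for each fixed φ. -/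
/-! Since `‖u‖²_{H¹} = ‖J u‖²_H + h(u, u)`, the form is real on the diagonal, so the imaginary
part of `h(u, u) - z ‖J u‖²` is `-(Im z) ‖J u‖²`; apply this to `u = S(z) φ`. -/

section

variable {H H1 : Type*} [NormedAddCommGroup H] [InnerProductSpace ℂ H]
  [NormedAddCommGroup H1] [InnerProductSpace ℂ H1]

theorem im_form_self_eq_zero {J : H1 → H} {hform : H1 → H1 → ℂ}
    (hdiag : ∀ u : H1, (inner ℂ u u : ℂ) = (inner ℂ (J u) (J u) : ℂ) + hform u u) (u : H1) :
    (hform u u).im = 0 := by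
  have hsplit := congrArg Complex.im (hdiag u)
  simpa [inner_self_eq_norm_sq_to_K, ← Complex.ofReal_pow] using hsplit.symm

theorem im_form_sub_mul_inner_self {J : H1 → H} {hform : H1 → H1 → ℂ}
    (hdiag : ∀ u : H1, (inner ℂ u u : ℂ) = (inner ℂ (J u) (J u) : ℂ) + hform u u)
    (z : ℂ) (u : H1) :
    (hform u u - z * (inner ℂ (J u) (J u) : ℂ)).im = -z.im * ‖J u‖ ^ 2 := by
  rw [inner_self_eq_norm_sq_to_K, ← RCLike.ofReal_pow, Complex.sub_im,
    im_form_self_eq_zero hdiag u, zero_sub, neg_mul]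
  exact congrArg Neg.neg (Complex.im_mul_ofReal z _)

end

theorem dtn_form_imaginary_part_general
    {H H1 G : Type*}
    [NormedAddCommGroup H] [InnerProductSpace ℂ H]
    [NormedAddCommGroup H1] [InnerProductSpace ℂ H1]
    [NormedAddCommGroup G] [InnerProductSpace ℂ G]
    (J : H1 →L[ℂ] H)
    (hform : H1 → H1 → ℂ)
    (hpol : ∀ u v : H1, (inner ℂ u v : ℂ) = (inner ℂ (J u) (J v) : ℂ) + hform u v)
    (Γ : H1 →L[ℂ] G)
    (z : ℂ) (hz : 0 ≤ z.im)
    -- Dirichlet solution operator at `z`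
    (Sz : (LinearMap.range (Γ : H1 →ₗ[ℂ] G) : Submodule ℂ G) →ₗ[ℂ] H1) :
    ∀ φ : (LinearMap.range (Γ : H1 →ₗ[ℂ] G) : Submodule ℂ G),
      (hform (Sz φ) (Sz φ) - z * (inner ℂ (J (Sz φ)) (J (Sz φ)) : ℂ)).im =
        -(z.im) * ‖J (Sz φ)‖ ^ 2 ∧
      (hform (Sz φ) (Sz φ) - z * (inner ℂ (J (Sz φ)) (J (Sz φ)) : ℂ)).im ≤ 0 := by
  intro φ
  have him := im_form_sub_mul_inner_self (fun u => hpol u u) z (Sz φ)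
  refine ⟨him, him ▸ ?_⟩
  exact mul_nonpos_of_nonpos_of_nonneg (neg_nonpos.mpr hz) (sq_nonneg _)

/-- Let `(Γ, G)` be a boundary pair for `h` and `l_z` the
Dirichlet-to-Neumann form at `z ∉ spec HD`.  For `z` with `Im z ≥ 0` and `φ ∈ ran Γ`,
the imaginary part of the quadratic form satisfies
`Im l_z(φ) = -(Im z)·‖S(z)φ‖²_H ≤ 0`.
(Here `l_z(φ) = l_z(φ,φ)` is computed with the lift `g = S(z)φ` of `φ`.) -/
theorem dtn_form_imaginary_part
    {H H1 G : Type*}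
    [NormedAddCommGroup H] [InnerProductSpace ℂ H] [CompleteSpace H]
    [NormedAddCommGroup H1] [InnerProductSpace ℂ H1] [CompleteSpace H1]
    [NormedAddCommGroup G] [InnerProductSpace ℂ G] [CompleteSpace G]
    (J : H1 →L[ℂ] H) (hJinj : Function.Injective J) (hJdense : DenseRange J)
    (hform : H1 → H1 → ℂ)
    (hpol : ∀ u v : H1, (inner ℂ u v : ℂ) = (inner ℂ (J u) (J v) : ℂ) + hform u v)
    (Γ : H1 →L[ℂ] G)
    (hker : Dense (J '' ((LinearMap.ker (Γ : H1 →ₗ[ℂ] G) : Submodule ℂ H1) : Set H1)))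
    (hran : Dense ((LinearMap.range (Γ : H1 →ₗ[ℂ] G) : Submodule ℂ G) : Set G))
    (z : ℂ) (hz : 0 ≤ z.im)
    -- Dirichlet solution operator at `z`
    (Sz : (LinearMap.range (Γ : H1 →ₗ[ℂ] G) : Submodule ℂ G) →ₗ[ℂ] H1)
    (hSz1 : ∀ (φ : (LinearMap.range (Γ : H1 →ₗ[ℂ] G) : Submodule ℂ G)) (f : H1), Γ f = 0 →
      hform f (Sz φ) = z * (inner ℂ (J f) (J (Sz φ)) : ℂ))
    (hSz2 : ∀ φ : (LinearMap.range (Γ : H1 →ₗ[ℂ] G) : Submodule ℂ G), Γ (Sz φ) = (φ : G)) :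
    ∀ φ : (LinearMap.range (Γ : H1 →ₗ[ℂ] G) : Submodule ℂ G),
      (hform (Sz φ) (Sz φ) - z * (inner ℂ (J (Sz φ)) (J (Sz φ)) : ℂ)).im =
        -(z.im) * ‖J (Sz φ)‖ ^ 2 ∧
      (hform (Sz φ) (Sz φ) - z * (inner ℂ (J (Sz φ)) (J (Sz φ)) : ℂ)).im ≤ 0 :=
  dtn_form_imaginary_part_general J hform hpol Γ z hz Sz
end

section
/- Let (Γ, G) be a boundary pair for h, and λ ∈ ℂ ∖ spec(H^D). Then the Dirichlet solution operator S(λ) restricts to a bijection from ker Λ(λ) onto ker(H^N − λ) with inverse Γ. In particular, λ is an eigenvalue of the Neumann operator H^N if and only if 0 is an eigenvalue of the strong Dirichlet-to-Neumann operator Λ(λ), and the multiplicities agree. -/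
/-!
Both directions are a matter of unfolding the two variational characterisations.  If
`h(g, u) = λ⟨Jg, Ju⟩` for every `g ∈ H¹`, then `Ju` lies in the domain of the Neumann operator
with `H^N (Ju) = λ Ju`, by maximality of `H^N`; conversely every eigenvector of `H^N` has such a
form representative `u`.  Such a `u` in particular solves the Dirichlet problem with boundary
value `Γu`, so uniqueness of Dirichlet solutions gives `S(λ)(Γu) = u`.  Nonzero vectors
correspond because `Γ ∘ S(λ) = id` and `J` is injective.
-/

open scoped InnerProductSpace

section FormEigenvector

variable {𝕜 V H : Type*} [RCLike 𝕜] [NormedAddCommGroup H] [InnerProductSpace 𝕜 H]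
  (J : V → H) (a : V → V → 𝕜) (A : H →ₗ.[𝕜] H) (lam : 𝕜)

theorem LinearPMap.exists_apply_eq_smul_of_form_eq_smul_inner
    (hmax : ∀ (u : V) (v : H), (∀ f, a f u = ⟪J f, v⟫_𝕜) →
      ∃ hu : J u ∈ A.domain, A ⟨J u, hu⟩ = v)
    {u : V} (hu : ∀ g, a g u = lam * ⟪J g, J u⟫_𝕜) :
    ∃ hJu : J u ∈ A.domain, A ⟨J u, hJu⟩ = lam • J u :=
  hmax u _ fun f => by rw [hu f, inner_smul_right]

theorem LinearPMap.exists_form_eq_smul_inner_of_apply_eq_smul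
    (hdom : ∀ u : A.domain, ∃ u1 : V, J u1 = u ∧ ∀ f, a f u1 = ⟪J f, A u⟫_𝕜)
    {u : A.domain} (hu : A u = lam • (u : H)) :
    ∃ u1 : V, J u1 = u ∧ ∀ g, a g u1 = lam * ⟪J g, J u1⟫_𝕜 := by
  obtain ⟨u1, hJu1, ha⟩ := hdom u
  exact ⟨u1, hJu1, fun g => by rw [ha g, hu, ← hJu1, inner_smul_right]⟩

end FormEigenvector

theorem neumann_eigenvalue_iff_dtn_kernel_general
    {H H1 G : Type*}
    [NormedAddCommGroup H] [InnerProductSpace ℂ H]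
    [NormedAddCommGroup H1] [InnerProductSpace ℂ H1]
    [NormedAddCommGroup G] [InnerProductSpace ℂ G]
    (J : H1 →L[ℂ] H) (hJinj : Function.Injective J)
    (hform : H1 → H1 → ℂ)
    (Γ : H1 →L[ℂ] G)
    -- the Neumann operator `HN`, associated with the form `h`
    (HN : H →ₗ.[ℂ] H)
    (hHNdom : ∀ u : HN.domain, ∃ u1 : H1, J u1 = (u : H) ∧
      ∀ f : H1, hform f u1 = (inner ℂ (J f) (HN u) : ℂ))
    (hHNmax : ∀ (u1 : H1) (v : H),
      (∀ f : H1, hform f u1 = (inner ℂ (J f) v : ℂ)) →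
      ∃ hu : J u1 ∈ HN.domain, HN ⟨J u1, hu⟩ = v)
    (lam : ℂ)
    -- `λ ∉ spec HD`: the Dirichlet solution operator at `λ` exists and is unique
    (Sl : (LinearMap.range (Γ : H1 →ₗ[ℂ] G) : Submodule ℂ G) →ₗ[ℂ] H1)
    (hSl2 : ∀ φ : (LinearMap.range (Γ : H1 →ₗ[ℂ] G) : Submodule ℂ G), Γ (Sl φ) = (φ : G))
    (hSl3 : ∀ u : H1, (∀ f : H1, Γ f = 0 → hform f u = lam * (inner ℂ (J f) (J u) : ℂ)) →
      ∀ hm : Γ u ∈ LinearMap.range (Γ : H1 →ₗ[ℂ] G), Sl ⟨Γ u, hm⟩ = u) :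
    -- `S(λ)` maps `ker Λ(λ)` into `ker (HN - λ)`
    (∀ φ : (LinearMap.range (Γ : H1 →ₗ[ℂ] G) : Submodule ℂ G),
      (∀ g : H1, hform g (Sl φ) = lam * (inner ℂ (J g) (J (Sl φ)) : ℂ)) →
      ∃ hu : J (Sl φ) ∈ HN.domain, HN ⟨J (Sl φ), hu⟩ = lam • (J (Sl φ))) ∧
    -- conversely, `Γ` maps `ker (HN - λ)` into `ker Λ(λ)`, with `S(λ) ∘ Γ = id` there
    (∀ u : HN.domain, HN u = lam • (u : H) →
      ∃ u1 : H1, J u1 = (u : H) ∧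
        (∀ g : H1, hform g u1 = lam * (inner ℂ (J g) (J u1) : ℂ)) ∧
        ∀ hm : Γ u1 ∈ LinearMap.range (Γ : H1 →ₗ[ℂ] G), Sl ⟨Γ u1, hm⟩ = u1) ∧
    -- eigenvalue equivalence
    ((∃ u : HN.domain, (u : H) ≠ 0 ∧ HN u = lam • (u : H)) ↔
      (∃ φ : (LinearMap.range (Γ : H1 →ₗ[ℂ] G) : Submodule ℂ G), (φ : G) ≠ 0 ∧
        ∀ g : H1, hform g (Sl φ) = lam * (inner ℂ (J g) (J (Sl φ)) : ℂ))) := by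
  have ker_to_eigen := fun φ (hφ : ∀ g : H1, hform g (Sl φ) = lam * ⟪J g, J (Sl φ)⟫_ℂ) =>
    HN.exists_apply_eq_smul_of_form_eq_smul_inner J hform lam hHNmax hφ
  have eigen_to_ker : ∀ u : HN.domain, HN u = lam • (u : H) →
      ∃ u1 : H1, J u1 = (u : H) ∧ (∀ g : H1, hform g u1 = lam * ⟪J g, J u1⟫_ℂ) ∧
        ∀ hm : Γ u1 ∈ LinearMap.range (Γ : H1 →ₗ[ℂ] G), Sl ⟨Γ u1, hm⟩ = u1 := by
    intro u hu
    obtain ⟨u1, hJu1, hu1⟩ := HN.exists_form_eq_smul_inner_of_apply_eq_smul J hform lam hHNdom hu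
    exact ⟨u1, hJu1, hu1, hSl3 u1 fun f _ => hu1 f⟩
  refine ⟨ker_to_eigen, eigen_to_ker, ⟨?_, ?_⟩⟩
  · rintro ⟨u, hu0, hu⟩
    obtain ⟨u1, hJu1, hu1, hS⟩ := eigen_to_ker u hu
    have hm : Γ u1 ∈ LinearMap.range (Γ : H1 →ₗ[ℂ] G) := LinearMap.mem_range_self _ u1
    refine ⟨⟨Γ u1, hm⟩, fun hΓ => hu0 ?_, by rwa [hS hm]⟩
    have hu1_zero : u1 = 0 := calc
      u1 = Sl ⟨Γ u1, hm⟩ := (hS hm).symm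
      _ = Sl 0 := congrArg Sl (Subtype.ext hΓ)
      _ = 0 := map_zero Sl
    rw [← hJu1, hu1_zero, map_zero]
  · rintro ⟨φ, hφ0, hφ⟩
    obtain ⟨hu, hHN⟩ := ker_to_eigen φ hφ
    refine ⟨⟨J (Sl φ), hu⟩, fun hJ => hφ0 ?_, hHN⟩
    have hSl_zero : Sl φ = 0 := hJinj (hJ.trans (map_zero J).symm)
    rw [← hSl2 φ, hSl_zero, map_zero]

/-- Let `(Γ, G)` be a boundary pair for `h` and `λ ∈ ℂ ∖ spec HD`.
The Dirichlet solution operator `S(λ)` restricts to a bijection from `ker Λ(λ)` onto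
`ker (HN - λ)`, with inverse `Γ`.  In particular, `λ` is an eigenvalue of the Neumann
operator `HN` if and only if `0` is an eigenvalue of the strong Dirichlet-to-Neumann
operator `Λ(λ)` (and multiplicities agree, through the bijection `S(λ)`/`Γ`).
Here `φ ∈ ker Λ(λ)` is expressed as `l_λ(φ, Γg) = 0` for all `g ∈ H¹`, i.e.
`h(g, S(λ)φ) = λ⟨Jg, J S(λ)φ⟩` for all `g ∈ H¹`. -/
theorem neumann_eigenvalue_iff_dtn_kernel
    {H H1 G : Type*}
    [NormedAddCommGroup H] [InnerProductSpace ℂ H] [CompleteSpace H]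
    [NormedAddCommGroup H1] [InnerProductSpace ℂ H1] [CompleteSpace H1]
    [NormedAddCommGroup G] [InnerProductSpace ℂ G] [CompleteSpace G]
    (J : H1 →L[ℂ] H) (hJinj : Function.Injective J) (hJdense : DenseRange J)
    (hform : H1 → H1 → ℂ)
    (hpol : ∀ u v : H1, (inner ℂ u v : ℂ) = (inner ℂ (J u) (J v) : ℂ) + hform u v)
    (Γ : H1 →L[ℂ] G)
    (hker : Dense (J '' ((LinearMap.ker (Γ : H1 →ₗ[ℂ] G) : Submodule ℂ H1) : Set H1)))
    (hran : Dense ((LinearMap.range (Γ : H1 →ₗ[ℂ] G) : Submodule ℂ G) : Set G))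
    -- the Neumann operator `HN`, associated with the form `h`
    (HN : H →ₗ.[ℂ] H)
    (hHNdom : ∀ u : HN.domain, ∃ u1 : H1, J u1 = (u : H) ∧
      ∀ f : H1, hform f u1 = (inner ℂ (J f) (HN u) : ℂ))
    (hHNmax : ∀ (u1 : H1) (v : H),
      (∀ f : H1, hform f u1 = (inner ℂ (J f) v : ℂ)) →
      ∃ hu : J u1 ∈ HN.domain, HN ⟨J u1, hu⟩ = v)
    (lam : ℂ)
    -- `λ ∉ spec HD`: the Dirichlet solution operator at `λ` exists and is unique
    (Sl : (LinearMap.range (Γ : H1 →ₗ[ℂ] G) : Submodule ℂ G) →ₗ[ℂ] H1)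
    (hSl1 : ∀ (φ : (LinearMap.range (Γ : H1 →ₗ[ℂ] G) : Submodule ℂ G)) (f : H1), Γ f = 0 →
      hform f (Sl φ) = lam * (inner ℂ (J f) (J (Sl φ)) : ℂ))
    (hSl2 : ∀ φ : (LinearMap.range (Γ : H1 →ₗ[ℂ] G) : Submodule ℂ G), Γ (Sl φ) = (φ : G))
    (hSl3 : ∀ u : H1, (∀ f : H1, Γ f = 0 → hform f u = lam * (inner ℂ (J f) (J u) : ℂ)) →
      ∀ hm : Γ u ∈ LinearMap.range (Γ : H1 →ₗ[ℂ] G), Sl ⟨Γ u, hm⟩ = u) :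
    -- `S(λ)` maps `ker Λ(λ)` into `ker (HN - λ)`
    (∀ φ : (LinearMap.range (Γ : H1 →ₗ[ℂ] G) : Submodule ℂ G),
      (∀ g : H1, hform g (Sl φ) = lam * (inner ℂ (J g) (J (Sl φ)) : ℂ)) →
      ∃ hu : J (Sl φ) ∈ HN.domain, HN ⟨J (Sl φ), hu⟩ = lam • (J (Sl φ))) ∧
    -- conversely, `Γ` maps `ker (HN - λ)` into `ker Λ(λ)`, with `S(λ) ∘ Γ = id` there
    (∀ u : HN.domain, HN u = lam • (u : H) →
      ∃ u1 : H1, J u1 = (u : H) ∧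
        (∀ g : H1, hform g u1 = lam * (inner ℂ (J g) (J u1) : ℂ)) ∧
        ∀ hm : Γ u1 ∈ LinearMap.range (Γ : H1 →ₗ[ℂ] G), Sl ⟨Γ u1, hm⟩ = u1) ∧
    -- eigenvalue equivalence
    ((∃ u : HN.domain, (u : H) ≠ 0 ∧ HN u = lam • (u : H)) ↔
      (∃ φ : (LinearMap.range (Γ : H1 →ₗ[ℂ] G) : Submodule ℂ G), (φ : G) ≠ 0 ∧
        ∀ g : H1, hform g (Sl φ) = lam * (inner ℂ (J g) (J (Sl φ)) : ℂ))) :=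
  neumann_eigenvalue_iff_dtn_kernel_general J hJinj hform Γ HN hHNdom hHNmax lam Sl hSl2 hSl3
end

section
/- Let (Γ, G) be a boundary pair for h. The following are equivalent: (i) the Neumann-to-Dirichlet operator Λ⁻¹ = Γ Γ^{(1)*} : G → G is compact (where Γ^{(1)*} is the adjoint of Γ : H¹ → G); (ii) Γ(H̃^N − z)⁻¹Γ* : G → G is compact for all z ∉ spec(H^N); (iii) Γ : H¹ → G is a compact operator. -/
/-!
Since `‖Γ* ψ‖² = ⟪ψ, ΓΓ* ψ⟫ ≤ ‖ψ‖ ‖ΓΓ* ψ‖`, compactness of `ΓΓ*` forces compactness of `Γ*`,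
hence of `Γ*Γ = Γ* (Γ*)*`, and the same estimate for `Γ*` then gives compactness of `Γ`.
For `z ∉ spec H^N` the operator `A = 1 - (1 + z) J*J` on `H¹` represents the form `h - z`, so the
weak solution is `u_ψ = A⁻¹ Γ* ψ`; the closed graph theorem makes `ψ ↦ u_ψ` bounded, and
`Γ (H̃^N - z)⁻¹ Γ* = Γ ∘ (ψ ↦ u_ψ)` is compact when `Γ` is. At `z = -1` it is `ΓΓ*` itself.
-/

open ContinuousLinearMap Function Metric Set

section CompactDomination

variable {𝕜 E F G : Type*} [NontriviallyNormedField 𝕜]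
  [SeminormedAddCommGroup E] [NormedSpace 𝕜 E]
  [NormedAddCommGroup F] [NormedSpace 𝕜 F] [CompleteSpace F]
  [SeminormedAddCommGroup G] [NormedSpace 𝕜 G]

-- An `ε²/2`-net of `K '' closedBall 0 1` chosen inside the image pulls back to an `ε`-net
-- of `S '' closedBall 0 1`.
theorem IsCompactOperator.of_norm_sq_le_mul {K : E →L[𝕜] G} (hK : IsCompactOperator K)
    (S : E →L[𝕜] F) (hS : ∀ x, ‖S x‖ ^ 2 ≤ ‖x‖ * ‖K x‖) : IsCompactOperator S := by
  refine (isCompactOperator_iff_isCompact_closure_image_closedBall (S : E →ₗ[𝕜] F) one_pos).2 ?_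
  refine TotallyBounded.isCompact_of_isClosed (TotallyBounded.closure ?_) isClosed_closure
  obtain ⟨C, hC, hKC⟩ := hK.image_closedBall_subset_compact 1
  rw [Metric.totallyBounded_iff]
  intro ε hε
  obtain ⟨t, htB, htfin, hcover⟩ := exists_subset_image_finite_and.1
    (finite_approx_of_totallyBounded (hC.totallyBounded.subset hKC) (ε ^ 2 / 2) (by positivity))
  refine ⟨S '' t, htfin.image S, ?_⟩
  rintro _ ⟨x, hx, rfl⟩
  obtain ⟨_, ⟨y, hyt, rfl⟩, hxy⟩ := mem_iUnion₂.1 (hcover ⟨x, hx, rfl⟩)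
  refine mem_iUnion₂.2 ⟨S y, mem_image_of_mem S hyt, ?_⟩
  have hxy_le : ‖x - y‖ ≤ 2 := by
    rw [mem_closedBall_zero_iff] at hx
    have hy := mem_closedBall_zero_iff.1 (htB hyt)
    linarith [norm_sub_le x y]
  rw [mem_ball, dist_eq_norm, ← map_sub] at hxy
  change dist (S x) (S y) < ε
  rw [dist_eq_norm, ← map_sub]
  refine lt_of_pow_lt_pow_left₀ 2 hε.le ?_
  calc ‖S (x - y)‖ ^ 2 ≤ ‖x - y‖ * ‖K (x - y)‖ := hS _
    _ ≤ 2 * ‖K (x - y)‖ := by gcongr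
    _ < 2 * (ε ^ 2 / 2) := by gcongr; exact hxy
    _ = ε ^ 2 := by ring

end CompactDomination

section Adjoint

variable {𝕜 E F : Type*} [RCLike 𝕜]
  [NormedAddCommGroup E] [InnerProductSpace 𝕜 E] [CompleteSpace E]
  [NormedAddCommGroup F] [InnerProductSpace 𝕜 F] [CompleteSpace F]

theorem ContinuousLinearMap.norm_adjoint_apply_sq_le (T : E →L[𝕜] F) (y : F) :
    ‖adjoint T y‖ ^ 2 ≤ ‖y‖ * ‖(T ∘L adjoint T) y‖ := by
  rw [apply_norm_sq_eq_inner_adjoint_right, adjoint_adjoint]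
  exact (RCLike.re_le_norm _).trans (norm_inner_le_norm _ _)

theorem IsCompactOperator.adjoint_of_comp_adjoint {T : E →L[𝕜] F}
    (h : IsCompactOperator (T ∘L adjoint T)) : IsCompactOperator (adjoint T) :=
  h.of_norm_sq_le_mul _ T.norm_adjoint_apply_sq_le

theorem isCompactOperator_comp_adjoint_iff (T : E →L[𝕜] F) :
    IsCompactOperator (T ∘L adjoint T) ↔ IsCompactOperator T := by
  refine ⟨fun h => ?_, fun h => h.comp_clm _⟩
  have h' : IsCompactOperator (adjoint T ∘L adjoint (adjoint T)) := by
    rw [adjoint_adjoint]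
    exact h.adjoint_of_comp_adjoint.comp_clm T
  simpa only [adjoint_adjoint] using h'.adjoint_of_comp_adjoint

end Adjoint

theorem ContinuousLinearMap.exists_coe_eq_of_injective_comp_eq {𝕜 E F G : Type*}
    [NontriviallyNormedField 𝕜]
    [NormedAddCommGroup E] [NormedSpace 𝕜 E] [CompleteSpace E]
    [NormedAddCommGroup F] [NormedSpace 𝕜 F]
    [NormedAddCommGroup G] [NormedSpace 𝕜 G] [CompleteSpace G]
    {A : E →L[𝕜] F} (hA : Injective A) (B : G →L[𝕜] F) (u : G → E) (hu : ∀ x, A (u x) = B x) :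
    ∃ S : G →L[𝕜] E, ⇑S = u := by
  let U : G →ₗ[𝕜] E :=
    { toFun := u
      map_add' := fun x y => hA <| by simp only [hu, map_add]
      map_smul' := fun c x => hA <| by simp only [hu, map_smul, RingHom.id_apply] }
  have hgraph : (U.graph : Set (G × E)) = {p | A p.2 = B p.1} := by
    ext p
    exact ⟨fun hp => (congrArg A hp).trans (hu p.1), fun hp => hA (hp.trans (hu p.1).symm)⟩
  have hclosed : IsClosed (U.graph : Set (G × E)) := by
    rw [hgraph]
    exact isClosed_eq (A.continuous.comp continuous_snd) (B.continuous.comp continuous_fst)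
  exact ⟨⟨U, U.continuous_of_isClosed_graph hclosed⟩, rfl⟩

theorem ntd_compact_iff_boundary_map_compact_general
    {H H1 G : Type*}
    [NormedAddCommGroup H] [InnerProductSpace ℂ H] [CompleteSpace H]
    [NormedAddCommGroup H1] [InnerProductSpace ℂ H1] [CompleteSpace H1]
    [NormedAddCommGroup G] [InnerProductSpace ℂ G] [CompleteSpace G]
    (J : H1 →L[ℂ] H)
    (hform : H1 → H1 → ℂ)
    (hpol : ∀ u v : H1, (inner ℂ u v : ℂ) = (inner ℂ (J u) (J v) : ℂ) + hform u v)
    (Γ : H1 →L[ℂ] G) :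
    -- (i) ↔ (iii)
    (IsCompactOperator (Γ ∘L (ContinuousLinearMap.adjoint Γ)) ↔ IsCompactOperator Γ) ∧
    -- (iii) ↔ (ii)
    (IsCompactOperator Γ ↔
      ∀ (z : ℂ) (W : G →L[ℂ] G),
        -- `z ∉ spec HN`: weak solutions at `z` are unique …
        (∀ u : H1, (∀ f : H1, hform f u = z * (inner ℂ (J f) (J u) : ℂ)) → u = 0) →
        -- … and `W = Γ (H̃N - z)⁻¹ Γ*`
        (∀ ψ : G, ∃ u : H1, Γ u = W ψ ∧
          ∀ f : H1, hform f u - z * (inner ℂ (J f) (J u) : ℂ) = (inner ℂ (Γ f) ψ : ℂ)) →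
        IsCompactOperator W) := by
  have hform_eq (f u : H1) : hform f u = inner ℂ f u - inner ℂ (J f) (J u) := by
    rw [hpol]; ring
  refine ⟨isCompactOperator_comp_adjoint_iff Γ, fun hΓ z W huniq hW => ?_, fun h => ?_⟩
  · set A : H1 →L[ℂ] H1 := 1 - (1 + z) • (adjoint J ∘L J)
    have hA (f u : H1) : inner ℂ f (A u) = hform f u - z * inner ℂ (J f) (J u) := by
      simp only [A, sub_apply, one_apply_eq_self, smul_apply, ContinuousLinearMap.comp_apply,
        inner_sub_right, inner_smul_right, adjoint_inner_right, hform_eq]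
      ring
    have hA_inj : Injective A := (injective_iff_map_eq_zero A).2 fun u hu =>
      huniq u fun f => sub_eq_zero.1 <| by rw [← hA, hu, inner_zero_right]
    choose u hΓu hu using hW
    obtain ⟨S, rfl⟩ := exists_coe_eq_of_injective_comp_eq hA_inj (adjoint Γ) u
      fun ψ => ext_inner_left ℂ fun f => by rw [hA, hu, adjoint_inner_right]
    have hW : W = Γ ∘L S := ext fun ψ => (hΓu ψ).symm
    exact hW ▸ hΓ.comp_clm S
  · refine (isCompactOperator_comp_adjoint_iff Γ).1 <| h (-1) _ (fun u hu => ?_)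
      fun ψ => ⟨adjoint Γ ψ, rfl, fun f => ?_⟩
    · have huu := hu u
      rw [hform_eq] at huu
      exact inner_self_eq_zero.1 (by linear_combination huu)
    · rw [hform_eq, adjoint_inner_right]; ring

/-- Let `(Γ, G)` be a boundary pair for `h`.  The following are
equivalent: (i) the Neumann-to-Dirichlet operator `Λ⁻¹ = Γ Γ^{(1)*} : G → G` is compact
(where `Γ^{(1)*}` is the Hilbert-space adjoint of `Γ : H¹ → G`); (ii) for all
`z ∉ spec HN`, the operator `Γ (H̃N - z)⁻¹ Γ* : G → G` is compact (any bounded operator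
`W` on `G` such that `Wψ = Γ u_ψ` where `u_ψ` is the unique weak solution of
`(h - z)(u, f) = ⟨Γf, ψ⟩` for all `f ∈ H¹`); (iii) `Γ : H¹ → G` is compact. -/
theorem ntd_compact_iff_boundary_map_compact
    {H H1 G : Type*}
    [NormedAddCommGroup H] [InnerProductSpace ℂ H] [CompleteSpace H]
    [NormedAddCommGroup H1] [InnerProductSpace ℂ H1] [CompleteSpace H1]
    [NormedAddCommGroup G] [InnerProductSpace ℂ G] [CompleteSpace G]
    (J : H1 →L[ℂ] H) (hJinj : Function.Injective J) (hJdense : DenseRange J)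
    (hform : H1 → H1 → ℂ)
    (hpol : ∀ u v : H1, (inner ℂ u v : ℂ) = (inner ℂ (J u) (J v) : ℂ) + hform u v)
    (Γ : H1 →L[ℂ] G)
    (hker : Dense (J '' ((LinearMap.ker (Γ : H1 →ₗ[ℂ] G) : Submodule ℂ H1) : Set H1)))
    (hran : Dense ((LinearMap.range (Γ : H1 →ₗ[ℂ] G) : Submodule ℂ G) : Set G)) :
    -- (i) ↔ (iii)
    (IsCompactOperator (Γ ∘L (ContinuousLinearMap.adjoint Γ)) ↔ IsCompactOperator Γ) ∧
    -- (iii) ↔ (ii)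
    (IsCompactOperator Γ ↔
      ∀ (z : ℂ) (W : G →L[ℂ] G),
        -- `z ∉ spec HN`: weak solutions at `z` are unique …
        (∀ u : H1, (∀ f : H1, hform f u = z * (inner ℂ (J f) (J u) : ℂ)) → u = 0) →
        -- … and `W = Γ (H̃N - z)⁻¹ Γ*`
        (∀ ψ : G, ∃ u : H1, Γ u = W ψ ∧
          ∀ f : H1, hform f u - z * (inner ℂ (J f) (J u) : ℂ) = (inner ℂ (Γ f) ψ : ℂ)) →
        IsCompactOperator W) :=
  ntd_compact_iff_boundary_map_compact_general J hform hpol Γ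
end

section
/- There exist a Hilbert space G, a self-adjoint operator A₀ on G with 0 an isolated eigenvalue of infinite multiplicity, and a bounded, injective, non-negative self-adjoint operator A₁ on G (not uniformly positive), such that the pencil T(z) = A₀ − zA₁ fails to have a bounded inverse for every z ∈ ℂ; in particular 0 belongs to the pencil spectrum but is not isolated in it, even though 0 is isolated in spec(A₀). Concretely: if (φ_n) is an orthonormal basis of ker A₀ and A₁ := 1_{ℝ∖{0}}(A₀) + Σ_n (1/n)⟨φ_n, ·⟩φ_n, then T(z)φ_n = −(z/n)φ_n, so ‖T(z)φ_n‖ → 0 for every z, and T(z) is never boundedly invertible. -/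
/-!
Take for `A₀` the orthogonal projection of `ℓ²(ℕ, ℂ)` onto the odd coordinates, so that
`spec A₀ = {0, 1}` and `ker A₀` is spanned by `φₙ = e₂ₙ`, and for `A₁` the diagonal operator that
is `1` on the odd coordinates and `(n + 1)⁻¹` on `e₂ₙ`. Then `T(z) φₙ = -(z / (n + 1)) φₙ`: every
`T(z)` fails to be bounded below along the unit vectors `φₙ`, hence has no bounded inverse, and
the same vectors show that `A₁` is not uniformly positive.
-/

open scoped lp ENNReal InnerProductSpace
open Filter Topology

namespace lp

variable {α 𝕜 : Type*} [RCLike 𝕜]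

theorem orthonormal_single [DecidableEq α] :
    Orthonormal 𝕜 (fun i : α => lp.single 2 i (1 : 𝕜)) := by
  have h (i : α) : lp.single 2 i (1 : 𝕜) = (default : HilbertBasis α 𝕜 ℓ²(α, 𝕜)) i :=
    HilbertBasis.repr_symm_single (default : HilbertBasis α 𝕜 ℓ²(α, 𝕜)) i
  rw [funext h]
  exact HilbertBasis.orthonormal _

theorem norm_ofReal_mul_apply_le {p : ℝ≥0∞} (d : lp (fun _ : α => ℝ) ∞)
    (f : lp (fun _ : α => 𝕜) p) (i : α) : ‖(d i : 𝕜) * f i‖ ≤ ‖d‖ * ‖f i‖ := by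
  rw [norm_mul, RCLike.norm_ofReal, ← Real.norm_eq_abs]
  gcongr
  exact norm_apply_le_norm ENNReal.top_ne_zero d i

theorem memℓp_ofReal_mul {p : ℝ≥0∞} (d : lp (fun _ : α => ℝ) ∞) (f : lp (fun _ : α => 𝕜) p) :
    Memℓp (fun i => (d i : 𝕜) * f i) p :=
  ((lp.memℓp f).norm.const_mul ‖d‖).mono (norm_ofReal_mul_apply_le d f)

section diagonal

variable {p : ℝ≥0∞} [Fact (1 ≤ p)]

noncomputable def diagonal (d : lp (fun _ : α => ℝ) ∞) :
    lp (fun _ : α => 𝕜) p →L[𝕜] lp (fun _ : α => 𝕜) p :=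
  LinearMap.mkContinuous
    { toFun f := ⟨fun i => (d i : 𝕜) * f i, memℓp_ofReal_mul d f⟩
      map_add' f g := ext <| funext fun i => mul_add _ _ _
      map_smul' c f := ext <| funext fun i => mul_left_comm _ _ _ }
    ‖d‖ fun f => calc
      _ ≤ ‖(‖d‖ : 𝕜) • f‖ := by
        refine norm_mono (zero_lt_one.trans_le Fact.out).ne' fun i => ?_
        show ‖(d i : 𝕜) * f i‖ ≤ ‖((‖d‖ : 𝕜) • f) i‖
        rw [lp.coeFn_smul, Pi.smul_apply, norm_smul, RCLike.norm_ofReal, abs_norm]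
        exact norm_ofReal_mul_apply_le d f i
      _ = ‖d‖ * ‖f‖ := by rw [norm_smul, RCLike.norm_ofReal, abs_norm]

@[simp]
theorem diagonal_apply (d : lp (fun _ : α => ℝ) ∞) (f : lp (fun _ : α => 𝕜) p) (i : α) :
    diagonal d f i = (d i : 𝕜) * f i :=
  rfl

theorem diagonal_single [DecidableEq α] (d : lp (fun _ : α => ℝ) ∞) (i : α) (c : 𝕜) :
    diagonal d (lp.single p i c) = d i • lp.single p i c := by
  ext j
  rcases eq_or_ne j i with rfl | hj
  · simp [RCLike.real_smul_eq_coe_mul]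
  · simp [hj]

theorem isIdempotentElem_diagonal {d : lp (fun _ : α => ℝ) ∞}
    (hd : ∀ i, IsIdempotentElem (d i)) :
    IsIdempotentElem (diagonal d : lp (fun _ : α => 𝕜) p →L[𝕜] lp (fun _ : α => 𝕜) p) := by
  ext f i
  simp [← mul_assoc, ← RCLike.ofReal_mul, (hd i).eq]

theorem injective_diagonal {d : lp (fun _ : α => ℝ) ∞} (hd : ∀ i, d i ≠ 0) :
    Function.Injective (diagonal d : lp (fun _ : α => 𝕜) p →L[𝕜] lp (fun _ : α => 𝕜) p) := by
  intro f g hfg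
  ext i
  exact mul_left_cancel₀ (RCLike.ofReal_ne_zero.2 (hd i)) congr($hfg i)

end diagonal

theorem isSelfAdjoint_diagonal (d : lp (fun _ : α => ℝ) ∞) :
    IsSelfAdjoint (diagonal d : ℓ²(α, 𝕜) →L[𝕜] ℓ²(α, 𝕜)) := by
  rw [ContinuousLinearMap.isSelfAdjoint_iff_isSymmetric]
  intro f g
  simp only [ContinuousLinearMap.coe_coe, lp.inner_eq_tsum, diagonal_apply]
  congr 1 with i
  simp only [RCLike.inner_apply, map_mul, RCLike.conj_ofReal]
  ring

theorem re_inner_diagonal_self_nonneg {d : lp (fun _ : α => ℝ) ∞} (hd : ∀ i, 0 ≤ d i)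
    (f : ℓ²(α, 𝕜)) : 0 ≤ RCLike.re ⟪f, diagonal d f⟫_𝕜 := by
  refine (RCLike.hasSum_re 𝕜 (lp.hasSum_inner f (diagonal d f))).nonneg fun i => ?_
  rw [diagonal_apply, RCLike.inner_apply, mul_assoc, RCLike.mul_conj, ← RCLike.ofReal_pow,
    ← RCLike.ofReal_mul, RCLike.ofReal_re]
  exact mul_nonneg (hd i) (sq_nonneg _)

end lp

namespace ContinuousLinearMap

variable {ι 𝕜 E : Type*} {l : Filter ι} [l.NeBot] {x : ι → E}

theorem not_isUnit_of_tendsto_norm_apply [NontriviallyNormedField 𝕜] [NormedAddCommGroup E]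
    [NormedSpace 𝕜 E] {T : E →L[𝕜] E} (hx : ∀ i, ‖x i‖ = 1)
    (hT : Tendsto (fun i => ‖T (x i)‖) l (𝓝 0)) : ¬ IsUnit T := by
  rintro ⟨u, rfl⟩
  have hinv (y : E) : (↑u⁻¹ : E →L[𝕜] E) ((u : E →L[𝕜] E) y) = y := congr($(u.inv_mul) y)
  have hbound (i : ι) : 1 ≤ ‖(↑u⁻¹ : E →L[𝕜] E)‖ * ‖(u : E →L[𝕜] E) (x i)‖ :=
    calc 1 = ‖(↑u⁻¹ : E →L[𝕜] E) ((u : E →L[𝕜] E) (x i))‖ := by rw [hinv, hx]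
      _ ≤ _ := le_opNorm _ _
  have := ge_of_tendsto' (by simpa using hT.const_mul ‖(↑u⁻¹ : E →L[𝕜] E)‖) hbound
  norm_num at this

theorem not_exists_pos_mul_sq_le_re_inner_of_tendsto [RCLike 𝕜] [NormedAddCommGroup E]
    [InnerProductSpace 𝕜 E] {T : E →L[𝕜] E} (hx : ∀ i, ‖x i‖ = 1)
    (hT : Tendsto (fun i => ‖T (x i)‖) l (𝓝 0)) :
    ¬ ∃ c : ℝ, 0 < c ∧ ∀ y, c * ‖y‖ ^ 2 ≤ RCLike.re ⟪y, T y⟫_𝕜 := by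
  rintro ⟨c, hc, hT_ge⟩
  have hc_le (i : ι) : c ≤ ‖T (x i)‖ :=
    calc c = c * ‖x i‖ ^ 2 := by simp [hx]
      _ ≤ RCLike.re ⟪x i, T (x i)⟫_𝕜 := hT_ge _
      _ ≤ ‖x i‖ * ‖T (x i)‖ := re_inner_le_norm _ _
      _ = ‖T (x i)‖ := by simp [hx]
  linarith [ge_of_tendsto' hT hc_le]

end ContinuousLinearMap

namespace PencilExample

/- `A₀` is a projection, so `1_{ℝ∖{0}}(A₀) = A₀` and the paper's
`A₁ = 1_{ℝ∖{0}}(A₀) + ∑ₙ (n + 1)⁻¹ ⟨φₙ, ·⟩ φₙ` is diagonal; `k / 2` is only read at even `k`. -/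

open ContinuousLinearMap

noncomputable def A₀ : ℓ²(ℕ, ℂ) →L[ℂ] ℓ²(ℕ, ℂ) :=
  lp.diagonal ⟨fun k => if Even k then 0 else 1,
    memℓp_infty ⟨1, Set.forall_mem_range.2 fun k => by split_ifs <;> simp⟩⟩

noncomputable def A₁ : ℓ²(ℕ, ℂ) →L[ℂ] ℓ²(ℕ, ℂ) :=
  lp.diagonal ⟨fun k => if Even k then ((k / 2 : ℕ) + 1 : ℝ)⁻¹ else 1,
    memℓp_infty ⟨1, Set.forall_mem_range.2 fun k => by
      split_ifs
      · rw [norm_inv]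
        exact inv_le_one_of_one_le₀ (by rw [Real.norm_of_nonneg (by positivity)]; simp)
      · simp⟩⟩

noncomputable def φ (n : ℕ) : ℓ²(ℕ, ℂ) := lp.single 2 (2 * n) 1

theorem norm_φ (n : ℕ) : ‖φ n‖ = 1 := by
  simp [φ, lp.norm_single]

theorem orthonormal_φ : Orthonormal ℂ φ :=
  lp.orthonormal_single.comp _ (mul_right_injective₀ two_ne_zero)

theorem A₀_φ (n : ℕ) : A₀ (φ n) = 0 := by
  simp [A₀, φ, lp.diagonal_single]

theorem A₁_φ (n : ℕ) : A₁ (φ n) = ((n : ℝ) + 1)⁻¹ • φ n := by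
  simp [A₁, φ, lp.diagonal_single]

theorem pencil_φ (z : ℂ) (n : ℕ) : (A₀ - z • A₁) (φ n) = (-(z / ((n : ℂ) + 1))) • φ n := by
  rw [sub_apply, smul_apply, A₀_φ, A₁_φ, RCLike.real_smul_eq_coe_smul (K := ℂ), smul_smul,
    zero_sub, ← neg_smul]
  push_cast
  rw [div_eq_mul_inv]

theorem tendsto_norm_pencil_φ (z : ℂ) :
    Tendsto (fun n => ‖(A₀ - z • A₁) (φ n)‖) atTop (𝓝 0) := by
  simp only [pencil_φ, norm_smul, norm_φ, mul_one, norm_neg, norm_div]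
  exact_mod_cast (tendsto_add_atTop_iff_nat 1).2 (tendsto_const_div_atTop_nhds_zero_nat ‖z‖)

theorem tendsto_norm_A₁_φ : Tendsto (fun n => ‖A₁ (φ n)‖) atTop (𝓝 0) := by
  have h (n : ℕ) : ‖A₁ (φ n)‖ = 1 / ((n : ℝ) + 1) := by
    rw [A₁_φ, norm_smul, norm_φ, mul_one, one_div, norm_inv, Real.norm_of_nonneg (by positivity)]
  simpa only [h] using tendsto_one_div_add_atTop_nhds_zero_nat

theorem isSelfAdjoint_A₀ : IsSelfAdjoint A₀ := lp.isSelfAdjoint_diagonal _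

theorem isSelfAdjoint_A₁ : IsSelfAdjoint A₁ := lp.isSelfAdjoint_diagonal _

theorem spectrum_A₀_subset : spectrum ℂ A₀ ⊆ {0, 1} :=
  IsIdempotentElem.spectrum_subset ℂ <| lp.isIdempotentElem_diagonal fun k => by
    by_cases hk : Even k <;> simp [hk, IsIdempotentElem]

theorem zero_mem_spectrum_A₀ : 0 ∈ spectrum ℂ A₀ :=
  (spectrum.zero_mem_iff ℂ).2 <|
    not_isUnit_of_tendsto_norm_apply (l := atTop) (x := fun _ : ℕ => φ 0) (fun _ => norm_φ 0)
      (by simp [A₀_φ])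

theorem re_inner_A₁_self_nonneg (x : ℓ²(ℕ, ℂ)) : 0 ≤ RCLike.re ⟪x, A₁ x⟫_ℂ :=
  lp.re_inner_diagonal_self_nonneg (fun k => by by_cases hk : Even k <;> simp [hk]; positivity) x

theorem injective_A₁ : Function.Injective A₁ :=
  lp.injective_diagonal fun k => by by_cases hk : Even k <;> simp [hk]; positivity

end PencilExample

/-- There exist (on the separable Hilbert space `G = ℓ²(ℕ, ℂ)`)
self-adjoint bounded operators `A₀`, `A₁` and an orthonormal family `(φₙ)` with:
`A₀ φₙ = 0` for all `n` (so `0` is an eigenvalue of infinite multiplicity), `0` is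
isolated in `spec A₀`; `A₁` is non-negative and injective but not uniformly positive,
with `A₁ φₙ = (n+1)⁻¹ φₙ`; the pencil `T(z) = A₀ - z A₁` satisfies
`T(z) φₙ = -(z/(n+1)) φₙ`, hence `‖T(z)φₙ‖ → 0`, and `T(z)` is never boundedly
invertible — so `0` lies in the pencil spectrum but is not isolated in it. -/
theorem exists_pencil_counterexample :
    ∃ (A₀ A₁ : lp (fun _ : ℕ => ℂ) 2 →L[ℂ] lp (fun _ : ℕ => ℂ) 2)
      (φ : ℕ → lp (fun _ : ℕ => ℂ) 2),
      IsSelfAdjoint A₀ ∧ IsSelfAdjoint A₁ ∧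
      Orthonormal ℂ φ ∧
      -- `(φₙ)` spans the kernel of `A₀`: `0` is an eigenvalue of infinite multiplicity
      (∀ n, A₀ (φ n) = 0) ∧
      -- `0` is isolated in `spec A₀`
      ((0 : ℂ) ∈ spectrum ℂ A₀ ∧
        ∃ ε > (0 : ℝ), ∀ w ∈ spectrum ℂ A₀, w ≠ 0 → ε ≤ ‖w‖) ∧
      -- `A₁` is non-negative, injective, but not uniformly positive
      (∀ x, 0 ≤ (inner ℂ x (A₁ x) : ℂ).re) ∧
      Function.Injective A₁ ∧
      (¬ ∃ c : ℝ, 0 < c ∧ ∀ x, c * ‖x‖ ^ 2 ≤ (inner ℂ x (A₁ x) : ℂ).re) ∧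
      (∀ n, A₁ (φ n) = (((n : ℝ) + 1)⁻¹ : ℝ) • φ n) ∧
      -- the pencil `T(z) = A₀ - zA₁`
      (∀ (z : ℂ) (n : ℕ), (A₀ - z • A₁) (φ n) = (-(z / ((n : ℂ) + 1))) • φ n) ∧
      (∀ z : ℂ, Filter.Tendsto (fun n => ‖(A₀ - z • A₁) (φ n)‖)
        Filter.atTop (nhds 0)) ∧
      -- `T(z)` is never boundedly invertible; in particular `0` is in the pencil
      -- spectrum but not isolated in it
      (∀ z : ℂ, ¬ IsUnit (A₀ - z • A₁)) := by
  open PencilExample ContinuousLinearMap in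
  refine ⟨A₀, A₁, φ, isSelfAdjoint_A₀, isSelfAdjoint_A₁, orthonormal_φ, A₀_φ,
    ⟨zero_mem_spectrum_A₀, 1, one_pos, fun w hw hw0 => ?_⟩, re_inner_A₁_self_nonneg, injective_A₁,
    not_exists_pos_mul_sq_le_re_inner_of_tendsto norm_φ tendsto_norm_A₁_φ, A₁_φ, pencil_φ,
    tendsto_norm_pencil_φ,
    fun z => not_isUnit_of_tendsto_norm_apply norm_φ (tendsto_norm_pencil_φ z)⟩
  obtain rfl : w = 1 := (spectrum_A₀_subset hw).resolve_left hw0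
  simp
end

section
/- Let (Γ, G) be a boundary pair for h which is elliptically regular, i.e. there is C > 0 with ‖Sφ‖_H ≤ C‖φ‖_G for all φ ∈ ran Γ. Then for every λ ∈ ℝ ∖ spec(H^D), the DtN form l_λ is bounded from below and closed on G^{1/2} = ran Γ; in particular, for real λ in a neighbourhood of −1, one has Re l_λ(φ) + ω(λ)‖φ‖²_G ≥ ‖φ‖²_{G^{1/2}} for a suitable ω(λ) ≥ 0 with ω(−1) = 0, so that the norm induced by l_λ is equivalent to the G^{1/2}-norm. -/
/-- The spectrum of a (possibly unbounded) operator `T`. -/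
def pmapSpectrum {E : Type*} [NormedAddCommGroup E] [NormedSpace ℂ E]
    (T : E →ₗ.[ℂ] E) : Set ℂ :=
  {z | ¬ ∃ R : E →L[ℂ] E, ResolventAt T z R}

/-!
Write `s = S(-1)φ` and `t = S(λ)φ`. Since `s ⊥ ker Γ` in `H¹` and `t - s ∈ ker Γ`, the
polarisation `⟨·,·⟩_{H¹} = ⟨J·, J·⟩_H + h` gives `l_λ(φ) = ‖s‖²_{H¹} - (λ + 1)⟨Js, Jt⟩_H`.
The difference `t - s` lies in `ker Γ` and solves `(HD - λ) J(t - s) = (λ + 1) Js` weakly, so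
`Jt = Js + (λ + 1) R Js` with `R = (HD - λ)⁻¹`, and elliptic regularity `‖Js‖ ≤ C‖φ‖` bounds
the correction term by `ω‖φ‖²`, with `ω = |λ + 1| (1 + |λ + 1| ‖R‖) C²`. Closedness reduces to
closedness of `(ker Γ)ᗮ` and continuity of `Γ`, since `Γ` is injective on `(ker Γ)ᗮ`.
-/

open Filter Topology
open scoped InnerProductSpace

section InnerProduct

variable {𝕜 E F : Type*} [RCLike 𝕜] [NormedAddCommGroup E] [InnerProductSpace 𝕜 E]

theorem eq_of_mem_orthogonal_ker_of_map_eq [AddCommGroup F] [Module 𝕜 F] (Γ : E →ₗ[𝕜] F)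
    {x y : E} (hx : x ∈ (LinearMap.ker Γ)ᗮ) (hy : y ∈ (LinearMap.ker Γ)ᗮ) (h : Γ x = Γ y) :
    x = y := by
  have hker : x - y ∈ LinearMap.ker Γ := by rw [LinearMap.mem_ker, map_sub, h, sub_self]
  exact sub_eq_zero.mp <|
    Submodule.disjoint_def.mp (LinearMap.ker Γ).orthogonal_disjoint _ hker (sub_mem hx hy)

theorem inner_eq_norm_sq_of_mem_orthogonal (K : Submodule 𝕜 E) {s t : E} (hs : s ∈ Kᗮ)
    (hts : t - s ∈ K) : ⟪s, t⟫_𝕜 = (‖s‖ : 𝕜) ^ 2 := by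
  have h := K.inner_left_of_mem_orthogonal hts hs
  rw [inner_sub_right, sub_eq_zero] at h
  rw [h, inner_self_eq_norm_sq_to_K]

theorem norm_mul_inner_add_smul_le (R : E →L[𝕜] E) (w : 𝕜) (x : E) :
    ‖w * ⟪x, x + w • R x⟫_𝕜‖ ≤ ‖w‖ * (1 + ‖w‖ * ‖R‖) * ‖x‖ ^ 2 := by
  have hRx : ‖x + w • R x‖ ≤ (1 + ‖w‖ * ‖R‖) * ‖x‖ :=
    calc ‖x + w • R x‖ ≤ ‖x‖ + ‖w‖ * (‖R‖ * ‖x‖) := by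
          grw [norm_add_le, norm_smul, R.le_opNorm]
      _ = (1 + ‖w‖ * ‖R‖) * ‖x‖ := by ring
  calc ‖w * ⟪x, x + w • R x⟫_𝕜‖ ≤ ‖w‖ * (‖x‖ * ((1 + ‖w‖ * ‖R‖) * ‖x‖)) := by
        grw [norm_mul, norm_inner_le_norm, hRx]
    _ = ‖w‖ * (1 + ‖w‖ * ‖R‖) * ‖x‖ ^ 2 := by ring

theorem exists_mem_orthogonal_ker_tendsto [CompleteSpace E] [NormedAddCommGroup F]
    [NormedSpace 𝕜 F] (Γ : E →L[𝕜] F) {s : ℕ → E}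
    (hs : ∀ n, s n ∈ (LinearMap.ker (Γ : E →ₗ[𝕜] F))ᗮ) (hcauchy : CauchySeq s) {ψ : F}
    (hψ : Tendsto (fun n => Γ (s n)) atTop (𝓝 ψ)) :
    ∃ u ∈ (LinearMap.ker (Γ : E →ₗ[𝕜] F))ᗮ, Γ u = ψ ∧ Tendsto s atTop (𝓝 u) := by
  obtain ⟨u, hu⟩ := cauchySeq_tendsto_of_complete hcauchy
  refine ⟨u, (Submodule.isClosed_orthogonal _).mem_of_tendsto hu (.of_forall hs),
    tendsto_nhds_unique ((Γ.continuous.tendsto u).comp hu) hψ, hu⟩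

end InnerProduct

section BoundaryPair

variable {H H1 G : Type*} [NormedAddCommGroup H] [InnerProductSpace ℂ H]
  [NormedAddCommGroup H1] [InnerProductSpace ℂ H1] [NormedAddCommGroup G] [InnerProductSpace ℂ G]
  {J : H1 →L[ℂ] H} {hform : H1 → H1 → ℂ} {Γ : H1 →L[ℂ] G}

theorem dtn_eq_norm_sq_sub (hpol : ∀ u v : H1, ⟪u, v⟫_ℂ = ⟪J u, J v⟫_ℂ + hform u v) (z : ℂ)
    {s t : H1} (hs : s ∈ (LinearMap.ker (Γ : H1 →ₗ[ℂ] G))ᗮ) (hts : Γ t = Γ s) :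
    hform s t - z * ⟪J s, J t⟫_ℂ = (‖s‖ : ℂ) ^ 2 - (z + 1) * ⟪J s, J t⟫_ℂ := by
  have hst := inner_eq_norm_sq_of_mem_orthogonal _ hs
    (by rw [LinearMap.mem_ker, ContinuousLinearMap.coe_coe, map_sub, hts, sub_self])
  linear_combination hst - hpol s t

theorem apply_solution_eq_add_smul_resolvent
    (hpol : ∀ u v : H1, ⟪u, v⟫_ℂ = ⟪J u, J v⟫_ℂ + hform u v) {HD : H →ₗ.[ℂ] H}
    (hHDmax : ∀ (u1 : H1) (w : H), Γ u1 = 0 →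
      (∀ f : H1, Γ f = 0 → hform f u1 = ⟪J f, w⟫_ℂ) → ∃ hu : J u1 ∈ HD.domain, HD ⟨J u1, hu⟩ = w)
    {z : ℂ} {R : H →L[ℂ] H} (hR : ResolventAt HD z R) {s t : H1}
    (hs : s ∈ (LinearMap.ker (Γ : H1 →ₗ[ℂ] G))ᗮ) (hts : Γ t = Γ s)
    (ht : ∀ f : H1, Γ f = 0 → hform f t = z * ⟪J f, J t⟫_ℂ) :
    J t = J s + (z + 1) • R (J s) := by
  have hker : Γ (t - s) = 0 := by rw [map_sub, hts, sub_self]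
  have hweak : ∀ f : H1, Γ f = 0 → hform f (t - s) = ⟪J f, z • J t + J s⟫_ℂ := by
    intro f hf
    have hfs : ⟪f, s⟫_ℂ = 0 :=
      Submodule.inner_right_of_mem_orthogonal (LinearMap.mem_ker.mpr hf) hs
    rw [inner_add_right, inner_smul_right]
    have hpol_sub := hpol f (t - s)
    rw [map_sub, inner_sub_right, inner_sub_right] at hpol_sub
    linear_combination ht f hf + hpol f t - hpol_sub - hfs
  obtain ⟨hdom, hHD⟩ := hHDmax _ _ hker hweak
  have hres := hR.2 ⟨J (t - s), hdom⟩
  rw [hHD, show z • J t + J s - z • J (t - s) = (z + 1) • J s by rw [map_sub]; module,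
    map_smul] at hres
  rw [← sub_eq_iff_eq_add', ← map_sub]
  exact hres.symm

theorem abs_re_dtn_sub_norm_sq_le
    (hpol : ∀ u v : H1, ⟪u, v⟫_ℂ = ⟪J u, J v⟫_ℂ + hform u v) {HD : H →ₗ.[ℂ] H}
    (hHDmax : ∀ (u1 : H1) (w : H), Γ u1 = 0 →
      (∀ f : H1, Γ f = 0 → hform f u1 = ⟪J f, w⟫_ℂ) → ∃ hu : J u1 ∈ HD.domain, HD ⟨J u1, hu⟩ = w)
    {z : ℂ} {R : H →L[ℂ] H} (hR : ResolventAt HD z R) {s t : H1}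
    (hs : s ∈ (LinearMap.ker (Γ : H1 →ₗ[ℂ] G))ᗮ) (hts : Γ t = Γ s)
    (ht : ∀ f : H1, Γ f = 0 → hform f t = z * ⟪J f, J t⟫_ℂ) :
    |(hform s t - z * ⟪J s, J t⟫_ℂ).re - ‖s‖ ^ 2| ≤
      ‖z + 1‖ * (1 + ‖z + 1‖ * ‖R‖) * ‖J s‖ ^ 2 := by
  rw [dtn_eq_norm_sq_sub hpol z hs hts, apply_solution_eq_add_smul_resolvent hpol hHDmax hR hs hts ht]
  norm_cast
  rw [Complex.sub_re, Complex.ofReal_re, sub_sub_cancel_left, abs_neg]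
  exact (Complex.abs_re_le_norm _).trans (norm_mul_inner_add_smul_le R _ _)

end BoundaryPair

theorem elliptically_regular_dtn_form_closed_and_bounded_below_general
    {H H1 G : Type*}
    [NormedAddCommGroup H] [InnerProductSpace ℂ H]
    [NormedAddCommGroup H1] [InnerProductSpace ℂ H1] [CompleteSpace H1]
    [NormedAddCommGroup G] [InnerProductSpace ℂ G]
    (J : H1 →L[ℂ] H)
    (hform : H1 → H1 → ℂ)
    (hpol : ∀ u v : H1, (inner ℂ u v : ℂ) = (inner ℂ (J u) (J v) : ℂ) + hform u v)
    (Γ : H1 →L[ℂ] G)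
    -- the Dirichlet operator `HD`
    (HD : H →ₗ.[ℂ] H)
    (hHDmax : ∀ (u1 : H1) (w : H), Γ u1 = 0 →
      (∀ f : H1, Γ f = 0 → hform f u1 = (inner ℂ (J f) w : ℂ)) →
      ∃ hu : J u1 ∈ HD.domain, HD ⟨J u1, hu⟩ = w)
    -- the Dirichlet solution operator `S = S(-1)`
    (Sm : (LinearMap.range (Γ : H1 →ₗ[ℂ] G) : Submodule ℂ G) →ₗ[ℂ] H1)
    (hSm1 : ∀ φ : (LinearMap.range (Γ : H1 →ₗ[ℂ] G) : Submodule ℂ G), Sm φ ∈ (LinearMap.ker (Γ : H1 →ₗ[ℂ] G))ᗮ)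
    (hSm2 : ∀ φ : (LinearMap.range (Γ : H1 →ₗ[ℂ] G) : Submodule ℂ G), Γ (Sm φ) = (φ : G))
    -- elliptic regularity: `‖Sφ‖_H ≤ C ‖φ‖_G`
    (C : ℝ)
    (hellreg : ∀ φ : (LinearMap.range (Γ : H1 →ₗ[ℂ] G) : Submodule ℂ G), ‖J (Sm φ)‖ ≤ C * ‖(φ : G)‖)
    -- `λ ∈ ℝ ∖ spec HD`
    (lam : ℝ) (hlam : (lam : ℂ) ∉ pmapSpectrum HD)
    -- the Dirichlet solution operator at `λ`
    (Sl : (LinearMap.range (Γ : H1 →ₗ[ℂ] G) : Submodule ℂ G) →ₗ[ℂ] H1)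
    (hSl1 : ∀ (φ : (LinearMap.range (Γ : H1 →ₗ[ℂ] G) : Submodule ℂ G)) (f : H1), Γ f = 0 →
      hform f (Sl φ) = (lam : ℂ) * (inner ℂ (J f) (J (Sl φ)) : ℂ))
    (hSl2 : ∀ φ : (LinearMap.range (Γ : H1 →ₗ[ℂ] G) : Submodule ℂ G), Γ (Sl φ) = (φ : G)) :
    ∃ ω K : ℝ, 0 ≤ ω ∧ (lam = -1 → ω = 0) ∧ 0 < K ∧
      -- equivalence of the `l_λ`-form norm with the `G^{1/2}`-norm `‖Sm ·‖_{H¹}`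
      (∀ φ : (LinearMap.range (Γ : H1 →ₗ[ℂ] G) : Submodule ℂ G),
        ‖Sm φ‖ ^ 2 ≤
          (hform (Sm φ) (Sl φ) - (lam : ℂ) * (inner ℂ (J (Sm φ)) (J (Sl φ)) : ℂ)).re +
            ω * ‖(φ : G)‖ ^ 2 ∧
        (hform (Sm φ) (Sl φ) - (lam : ℂ) * (inner ℂ (J (Sm φ)) (J (Sl φ)) : ℂ)).re +
            ω * ‖(φ : G)‖ ^ 2 ≤ K * ‖Sm φ‖ ^ 2) ∧
      -- `l_λ` is bounded from below
      (∃ m : ℝ, ∀ φ : (LinearMap.range (Γ : H1 →ₗ[ℂ] G) : Submodule ℂ G),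
        m * ‖(φ : G)‖ ^ 2 ≤
          (hform (Sm φ) (Sl φ) - (lam : ℂ) * (inner ℂ (J (Sm φ)) (J (Sl φ)) : ℂ)).re) ∧
      -- `l_λ` is closed on `G^{1/2} = ran Γ`
      (∀ (φ : ℕ → (LinearMap.range (Γ : H1 →ₗ[ℂ] G) : Submodule ℂ G)) (ψ : G),
        CauchySeq (fun n => Sm (φ n)) →
        Filter.Tendsto (fun n => ((φ n : G))) Filter.atTop (nhds ψ) →
        ∃ φ' : (LinearMap.range (Γ : H1 →ₗ[ℂ] G) : Submodule ℂ G), (φ' : G) = ψ ∧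
          Filter.Tendsto (fun n => Sm (φ n)) Filter.atTop (nhds (Sm φ'))) := by
  obtain ⟨R, hR⟩ : ∃ R : H →L[ℂ] H, ResolventAt HD (lam : ℂ) R := not_not.mp hlam
  set ω := ‖(lam : ℂ) + 1‖ * (1 + ‖(lam : ℂ) + 1‖ * ‖R‖) * C ^ 2 with hω_def
  have hω : 0 ≤ ω := by positivity
  have hdev : ∀ φ : (LinearMap.range (Γ : H1 →ₗ[ℂ] G) : Submodule ℂ G),
      |(hform (Sm φ) (Sl φ) - (lam : ℂ) * ⟪J (Sm φ), J (Sl φ)⟫_ℂ).re - ‖Sm φ‖ ^ 2| ≤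
        ω * ‖(φ : G)‖ ^ 2 := by
    intro φ
    have hJS : ‖J (Sm φ)‖ ^ 2 ≤ C ^ 2 * ‖(φ : G)‖ ^ 2 := by
      rw [← mul_pow]; exact pow_le_pow_left₀ (norm_nonneg _) (hellreg φ) 2
    calc _ ≤ ‖(lam : ℂ) + 1‖ * (1 + ‖(lam : ℂ) + 1‖ * ‖R‖) * ‖J (Sm φ)‖ ^ 2 :=
          abs_re_dtn_sub_norm_sq_le hpol hHDmax hR (hSm1 φ) (by rw [hSl2, hSm2]) (hSl1 φ)
      _ ≤ ‖(lam : ℂ) + 1‖ * (1 + ‖(lam : ℂ) + 1‖ * ‖R‖) * (C ^ 2 * ‖(φ : G)‖ ^ 2) := by gcongr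
      _ = ω * ‖(φ : G)‖ ^ 2 := by ring
  have hΓ : ∀ φ : (LinearMap.range (Γ : H1 →ₗ[ℂ] G) : Submodule ℂ G),
      ‖(φ : G)‖ ^ 2 ≤ ‖Γ‖ ^ 2 * ‖Sm φ‖ ^ 2 := by
    intro φ
    rw [← mul_pow, ← hSm2 φ]; exact pow_le_pow_left₀ (norm_nonneg _) (Γ.le_opNorm _) 2
  refine ⟨ω, 1 + 2 * ω * ‖Γ‖ ^ 2, hω, ?_, by positivity, fun φ => ?_, ⟨-ω, fun φ => ?_⟩, ?_⟩
  · rintro rfl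
    simp [hω_def]
  · have := abs_le.mp (hdev φ)
    constructor <;> nlinarith [mul_le_mul_of_nonneg_left (hΓ φ) hω]
  · linarith [abs_le.mp (hdev φ), sq_nonneg ‖Sm φ‖]
  · intro φ ψ hcauchy hψ
    obtain ⟨u, hu, hΓu, hlim⟩ := exists_mem_orthogonal_ker_tendsto Γ (fun n => hSm1 (φ n))
      hcauchy (by simpa only [hSm2] using hψ)
    refine ⟨⟨ψ, u, hΓu⟩, rfl, ?_⟩
    rwa [eq_of_mem_orthogonal_ker_of_map_eq _ (hSm1 _) hu (by simp [hSm2, hΓu])]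

/-- Let `(Γ, G)` be an *elliptically regular* boundary pair for `h`
(`‖Sφ‖_H ≤ C‖φ‖_G` for all `φ ∈ ran Γ`, where `S = S(-1)`).  Then for every
`λ ∈ ℝ ∖ spec HD`, the DtN form `l_λ(φ) = h(S(λ)φ, Sφ) - λ⟨S(λ)φ, Sφ⟩_H` is bounded
from below and closed on `G^{1/2} = ran Γ`; in particular there is `ω(λ) ≥ 0` with
`ω(-1) = 0` such that `Re l_λ(φ) + ω(λ)‖φ‖²_G ≥ ‖φ‖²_{G^{1/2}}` (where
`‖φ‖²_{G^{1/2}} = ‖Sφ‖²_{H¹}`), and the norm induced by `l_λ` is equivalent to the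
`G^{1/2}`-norm. -/
theorem elliptically_regular_dtn_form_closed_and_bounded_below
    {H H1 G : Type*}
    [NormedAddCommGroup H] [InnerProductSpace ℂ H] [CompleteSpace H]
    [NormedAddCommGroup H1] [InnerProductSpace ℂ H1] [CompleteSpace H1]
    [NormedAddCommGroup G] [InnerProductSpace ℂ G] [CompleteSpace G]
    (J : H1 →L[ℂ] H) (hJinj : Function.Injective J) (hJdense : DenseRange J)
    (hform : H1 → H1 → ℂ)
    (hpol : ∀ u v : H1, (inner ℂ u v : ℂ) = (inner ℂ (J u) (J v) : ℂ) + hform u v)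
    (Γ : H1 →L[ℂ] G)
    (hker : Dense (J '' ((LinearMap.ker (Γ : H1 →ₗ[ℂ] G) : Submodule ℂ H1) : Set H1)))
    (hran : Dense ((LinearMap.range (Γ : H1 →ₗ[ℂ] G) : Submodule ℂ G) : Set G))
    -- the Dirichlet operator `HD`
    (HD : H →ₗ.[ℂ] H)
    (hHDdom : ∀ u : HD.domain, ∃ u1 : H1, J u1 = (u : H) ∧ Γ u1 = 0 ∧
      ∀ f : H1, Γ f = 0 → hform f u1 = (inner ℂ (J f) (HD u) : ℂ))
    (hHDmax : ∀ (u1 : H1) (w : H), Γ u1 = 0 →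
      (∀ f : H1, Γ f = 0 → hform f u1 = (inner ℂ (J f) w : ℂ)) →
      ∃ hu : J u1 ∈ HD.domain, HD ⟨J u1, hu⟩ = w)
    -- the Dirichlet solution operator `S = S(-1)`
    (Sm : (LinearMap.range (Γ : H1 →ₗ[ℂ] G) : Submodule ℂ G) →ₗ[ℂ] H1)
    (hSm1 : ∀ φ : (LinearMap.range (Γ : H1 →ₗ[ℂ] G) : Submodule ℂ G), Sm φ ∈ (LinearMap.ker (Γ : H1 →ₗ[ℂ] G))ᗮ)
    (hSm2 : ∀ φ : (LinearMap.range (Γ : H1 →ₗ[ℂ] G) : Submodule ℂ G), Γ (Sm φ) = (φ : G))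
    -- elliptic regularity: `‖Sφ‖_H ≤ C ‖φ‖_G`
    (C : ℝ)
    (hellreg : ∀ φ : (LinearMap.range (Γ : H1 →ₗ[ℂ] G) : Submodule ℂ G), ‖J (Sm φ)‖ ≤ C * ‖(φ : G)‖)
    -- `λ ∈ ℝ ∖ spec HD`
    (lam : ℝ) (hlam : (lam : ℂ) ∉ pmapSpectrum HD)
    -- the Dirichlet solution operator at `λ`
    (Sl : (LinearMap.range (Γ : H1 →ₗ[ℂ] G) : Submodule ℂ G) →ₗ[ℂ] H1)
    (hSl1 : ∀ (φ : (LinearMap.range (Γ : H1 →ₗ[ℂ] G) : Submodule ℂ G)) (f : H1), Γ f = 0 →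
      hform f (Sl φ) = (lam : ℂ) * (inner ℂ (J f) (J (Sl φ)) : ℂ))
    (hSl2 : ∀ φ : (LinearMap.range (Γ : H1 →ₗ[ℂ] G) : Submodule ℂ G), Γ (Sl φ) = (φ : G)) :
    ∃ ω K : ℝ, 0 ≤ ω ∧ (lam = -1 → ω = 0) ∧ 0 < K ∧
      -- equivalence of the `l_λ`-form norm with the `G^{1/2}`-norm `‖Sm ·‖_{H¹}`
      (∀ φ : (LinearMap.range (Γ : H1 →ₗ[ℂ] G) : Submodule ℂ G),
        ‖Sm φ‖ ^ 2 ≤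
          (hform (Sm φ) (Sl φ) - (lam : ℂ) * (inner ℂ (J (Sm φ)) (J (Sl φ)) : ℂ)).re +
            ω * ‖(φ : G)‖ ^ 2 ∧
        (hform (Sm φ) (Sl φ) - (lam : ℂ) * (inner ℂ (J (Sm φ)) (J (Sl φ)) : ℂ)).re +
            ω * ‖(φ : G)‖ ^ 2 ≤ K * ‖Sm φ‖ ^ 2) ∧
      -- `l_λ` is bounded from below
      (∃ m : ℝ, ∀ φ : (LinearMap.range (Γ : H1 →ₗ[ℂ] G) : Submodule ℂ G),
        m * ‖(φ : G)‖ ^ 2 ≤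
          (hform (Sm φ) (Sl φ) - (lam : ℂ) * (inner ℂ (J (Sm φ)) (J (Sl φ)) : ℂ)).re) ∧
      -- `l_λ` is closed on `G^{1/2} = ran Γ`
      (∀ (φ : ℕ → (LinearMap.range (Γ : H1 →ₗ[ℂ] G) : Submodule ℂ G)) (ψ : G),
        CauchySeq (fun n => Sm (φ n)) →
        Filter.Tendsto (fun n => ((φ n : G))) Filter.atTop (nhds ψ) →
        ∃ φ' : (LinearMap.range (Γ : H1 →ₗ[ℂ] G) : Submodule ℂ G), (φ' : G) = ψ ∧
          Filter.Tendsto (fun n => Sm (φ n)) Filter.atTop (nhds (Sm φ'))) :=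
  elliptically_regular_dtn_form_closed_and_bounded_below_general J hform hpol Γ HD hHDmax Sm hSm1
    hSm2 C hellreg lam hlam Sl hSl1 hSl2
end
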